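/- arXiv:2110.04501 — 9 statements merged into one kernel-verified Lean document; each statement's English description precedes it below -/
import Mathlib

section
/- The set G^c is a subgroup of G. -/
def GcSubgroup {G : Type*} [Group G] (P : Submonoid G) : Subgroup G where
  carrier := {g : G | ∀ p ∈ P, ∃ q₁ ∈ P, ∃ q₂ ∈ P, p * q₁ = g * (p * q₂)}
  one_mem' := fun p _ => ⟨1, P.one_mem, 1, P.one_mem, by group⟩
  mul_mem' := by
    rintro g h hg hh p hp
    obtain ⟨a, ha, b, hb, hab⟩ := hh p hp
    obtain ⟨c, hc, d, hd, hcd⟩ := hg (p * a) (P.mul_mem hp ha)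
    refine ⟨a * c, P.mul_mem ha hc, b * d, P.mul_mem hb hd, ?_⟩
    calc p * (a * c) = p * a * c := by group
      _ = g * (p * a * d) := hcd
      _ = g * (h * (p * b) * d) := by rw [hab]
      _ = g * h * (p * (b * d)) := by group
  inv_mem' := by
    rintro g hg p hp
    obtain ⟨a, ha, b, hb, hab⟩ := hg p hp
    exact ⟨b, hb, a, ha, by rw [eq_inv_mul_iff_mul_eq, hab]⟩

/-- Let `P` be a submonoid of a group `G`.  Define
`G^c := {g ∈ G : ∀ p ∈ P, (pP) ∩ (gpP) ≠ ∅}`.  Then `G^c` is a subgroup of `G`. -/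
theorem Gc_is_subgroup {G : Type*} [Group G] (P : Submonoid G) :
    ∃ H : Subgroup G,
      ∀ g : G, g ∈ H ↔ ∀ p ∈ P, ∃ q₁ ∈ P, ∃ q₂ ∈ P, p * q₁ = g * (p * q₂) := by
  exact ⟨GcSubgroup P, fun g => Iff.rfl⟩
end

section
/- If s, t ∈ S^c then st ∈ S^c. -/
/-- An inverse semigroup with zero: a semigroup with zero together with an inverse
operation such that `s s⁻¹ s = s`, `s⁻¹ s s⁻¹ = s⁻¹`, and idempotents commute
(which makes inverses unique). -/
class InverseSemigroupWithZero (S : Type*) extends SemigroupWithZero S, Inv S where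
  mul_inv_mul : ∀ s : S, s * s⁻¹ * s = s
  inv_mul_inv : ∀ s : S, s⁻¹ * s * s⁻¹ = s⁻¹
  idem_comm : ∀ e f : S, e * e = e → f * f = f → e * f = f * e

/-- `S^c := {s ∈ S : for all idempotents e with 0 ≠ e ≤ s⁻¹s, e·(s e s⁻¹) ≠ 0}`,
where `e ≤ f` iff `e * f = e`. -/
def Sc (S : Type*) [InverseSemigroupWithZero S] : Set S :=
  {s | ∀ e : S, e * e = e → e ≠ 0 → e * (s⁻¹ * s) = e → e * (s * e * s⁻¹) ≠ 0}

namespace ISWZ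
variable {S : Type*} [InverseSemigroupWithZero S]

lemma mim (a : S) : a * a⁻¹ * a = a := InverseSemigroupWithZero.mul_inv_mul a
lemma imi (a : S) : a⁻¹ * a * a⁻¹ = a⁻¹ := InverseSemigroupWithZero.inv_mul_inv a
lemma icomm {e f : S} (he : e * e = e) (hf : f * f = f) : e * f = f * e :=
  InverseSemigroupWithZero.idem_comm e f he hf

lemma idem_ii (a : S) : (a⁻¹ * a) * (a⁻¹ * a) = a⁻¹ * a := by
  rw [← mul_assoc, imi]

lemma idem_mi (a : S) : (a * a⁻¹) * (a * a⁻¹) = a * a⁻¹ := by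
  rw [← mul_assoc, mim]

lemma inv_unique (a x : S) (h1 : a * x * a = a) (h2 : x * a * x = x) : x = a⁻¹ := by
  have iq : (x * a) * (x * a) = x * a := by
    calc (x * a) * (x * a) = (x * a * x) * a := by simp only [mul_assoc]
      _ = x * a := by rw [h2]
  have ip : (a * x) * (a * x) = a * x := by
    calc (a * x) * (a * x) = (a * x * a) * x := by simp only [mul_assoc]
      _ = a * x := by rw [h1]
  have e3 : x = x * (a * a⁻¹) := by
    calc x = x * a * x := h2.symm
      _ = x * (a * a⁻¹ * a) * x := by rw [mim]
      _ = x * ((a * a⁻¹) * (a * x)) := by simp only [mul_assoc]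
      _ = x * ((a * x) * (a * a⁻¹)) := by rw [icomm (idem_mi a) ip]
      _ = (x * a * x) * (a * a⁻¹) := by simp only [mul_assoc]
      _ = x * (a * a⁻¹) := by rw [h2]
  have e4 : a⁻¹ = x * (a * a⁻¹) := by
    calc a⁻¹ = a⁻¹ * a * a⁻¹ := (imi a).symm
      _ = a⁻¹ * (a * x * a) * a⁻¹ := by rw [h1]
      _ = ((a⁻¹ * a) * (x * a)) * a⁻¹ := by simp only [mul_assoc]
      _ = ((x * a) * (a⁻¹ * a)) * a⁻¹ := by rw [icomm (idem_ii a) iq]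
      _ = (x * a) * (a⁻¹ * a * a⁻¹) := by simp only [mul_assoc]
      _ = (x * a) * a⁻¹ := by rw [imi]
      _ = x * (a * a⁻¹) := by simp only [mul_assoc]
  exact e3.trans e4.symm

lemma mul_inv_rev (s t : S) : (s * t)⁻¹ = t⁻¹ * s⁻¹ := by
  refine (inv_unique (s * t) (t⁻¹ * s⁻¹) ?_ ?_).symm
  · calc (s * t) * (t⁻¹ * s⁻¹) * (s * t)
        = s * ((t * t⁻¹) * (s⁻¹ * s)) * t := by simp only [mul_assoc]
      _ = s * ((s⁻¹ * s) * (t * t⁻¹)) * t := by rw [icomm (idem_mi t) (idem_ii s)]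
      _ = (s * s⁻¹ * s) * (t * t⁻¹ * t) := by simp only [mul_assoc]
      _ = s * t := by rw [mim, mim]
  · calc (t⁻¹ * s⁻¹) * (s * t) * (t⁻¹ * s⁻¹)
        = t⁻¹ * ((s⁻¹ * s) * (t * t⁻¹)) * s⁻¹ := by simp only [mul_assoc]
      _ = t⁻¹ * ((t * t⁻¹) * (s⁻¹ * s)) * s⁻¹ := by rw [icomm (idem_ii s) (idem_mi t)]
      _ = (t⁻¹ * t * t⁻¹) * (s⁻¹ * s * s⁻¹) := by simp only [mul_assoc]
      _ = t⁻¹ * s⁻¹ := by rw [imi, imi]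

end ISWZ

open ISWZ in
/-- If `s, t ∈ S^c` then `s * t ∈ S^c`. -/
theorem Sc_mul_mem {S : Type*} [InverseSemigroupWithZero S] (s t : S)
    (hs : s ∈ Sc S) (ht : t ∈ Sc S) : s * t ∈ Sc S := by
  intro e he hne hle
  rw [ISWZ.mul_inv_rev] at hle ⊢
  -- hle : e * (t⁻¹ * s⁻¹ * (s * t)) = e
  have hett : e * (t⁻¹ * t) = e := by
    calc e * (t⁻¹ * t) = (e * (t⁻¹ * s⁻¹ * (s * t))) * (t⁻¹ * t) := by rw [hle]
      _ = (e * (t⁻¹ * (s⁻¹ * s))) * (t * t⁻¹ * t) := by simp only [mul_assoc]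
      _ = (e * (t⁻¹ * (s⁻¹ * s))) * t := by rw [mim]
      _ = e * (t⁻¹ * s⁻¹ * (s * t)) := by simp only [mul_assoc]
      _ = e := hle
  have hef : e * (t * e * t⁻¹) ≠ 0 := ht e he hne hett
  set f := t * e * t⁻¹ with hfd
  have hf : f * f = f := by
    calc (t * e * t⁻¹) * (t * e * t⁻¹)
        = t * (e * ((t⁻¹ * t) * e)) * t⁻¹ := by simp only [mul_assoc]
      _ = t * (e * (e * (t⁻¹ * t))) * t⁻¹ := by rw [← icomm he (idem_ii t)]
      _ = (t * (e * e)) * (t⁻¹ * t * t⁻¹) := by simp only [mul_assoc]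
      _ = (t * e) * t⁻¹ := by rw [he, imi]
  have hfss : f * (s⁻¹ * s) = f := by
    have : t * e * t⁻¹ = (t * e * t⁻¹) * (s⁻¹ * s) := by
      calc t * e * t⁻¹ = t * (e * (t⁻¹ * s⁻¹ * (s * t))) * t⁻¹ := by rw [hle]
        _ = (t * e) * (t⁻¹ * ((s⁻¹ * s) * (t * t⁻¹))) := by simp only [mul_assoc]
        _ = (t * e) * (t⁻¹ * ((t * t⁻¹) * (s⁻¹ * s))) := by rw [icomm (idem_ii s) (idem_mi t)]
        _ = (t * e) * ((t⁻¹ * t * t⁻¹) * (s⁻¹ * s)) := by simp only [mul_assoc]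
        _ = (t * e) * (t⁻¹ * (s⁻¹ * s)) := by rw [imi]
        _ = (t * e * t⁻¹) * (s⁻¹ * s) := by simp only [mul_assoc]
    exact this.symm
  have hcef : e * f = f * e := icomm he hf
  have hk : (e * f) * (e * f) = e * f := by
    calc (e * f) * (e * f) = (e * (f * e)) * f := by simp only [mul_assoc]
      _ = (e * (e * f)) * f := by rw [← hcef]
      _ = (e * e) * (f * f) := by simp only [mul_assoc]
      _ = e * f := by rw [he, hf]
  have hkss : (e * f) * (s⁻¹ * s) = e * f := by
    rw [mul_assoc, hfss]
  have hm : (e * f) * (s * (e * f) * s⁻¹) ≠ 0 := hs (e * f) hk hef hkss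
  have hmi : (s * (e * f) * s⁻¹) * (s * (e * f) * s⁻¹) = s * (e * f) * s⁻¹ := by
    calc (s * (e * f) * s⁻¹) * (s * (e * f) * s⁻¹)
        = s * (((e * f) * (s⁻¹ * s)) * (e * f)) * s⁻¹ := by simp only [mul_assoc]
      _ = s * ((e * f) * (e * f)) * s⁻¹ := by rw [hkss]
      _ = s * (e * f) * s⁻¹ := by rw [hk]
  have hgm : (s * f * s⁻¹) * (s * (e * f) * s⁻¹) = s * (e * f) * s⁻¹ := by
    calc (s * f * s⁻¹) * (s * (e * f) * s⁻¹)
        = s * (f * ((s⁻¹ * s) * (e * f))) * s⁻¹ := by simp only [mul_assoc]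
      _ = s * (f * ((e * f) * (s⁻¹ * s))) * s⁻¹ := by rw [← icomm hk (idem_ii s)]
      _ = s * (f * (e * f)) * s⁻¹ := by rw [hkss]
      _ = s * ((f * e) * f) * s⁻¹ := by simp only [mul_assoc]
      _ = s * ((e * f) * f) * s⁻¹ := by rw [← hcef]
      _ = s * (e * (f * f)) * s⁻¹ := by simp only [mul_assoc]
      _ = s * (e * f) * s⁻¹ := by rw [hf]
  intro hw
  -- hw : e * (s * t * e * (t⁻¹ * s⁻¹)) = 0
  have hw2 : e * (s * f * s⁻¹) = 0 := by
    rw [hfd]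
    calc e * (s * (t * e * t⁻¹) * s⁻¹) = e * (s * t * e * (t⁻¹ * s⁻¹)) := by
          simp only [mul_assoc]
      _ = 0 := hw
  have : (e * f) * (s * (e * f) * s⁻¹) = 0 := by
    calc (e * f) * (s * (e * f) * s⁻¹)
        = e * (f * (s * (e * f) * s⁻¹)) := by rw [mul_assoc]
      _ = e * ((s * (e * f) * s⁻¹) * f) := by rw [icomm hf hmi]
      _ = e * (((s * f * s⁻¹) * (s * (e * f) * s⁻¹)) * f) := by rw [hgm]
      _ = (e * (s * f * s⁻¹)) * ((s * (e * f) * s⁻¹) * f) := by simp only [mul_assoc]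
      _ = 0 * ((s * (e * f) * s⁻¹) * f) := by rw [hw2]
      _ = 0 := zero_mul _
  exact hm this
end

section
/- If 𝔠 is a finitely aligned left cancellative small category, then every e ∈ 𝒥 is a finite union of principal right ideals: there exists a finite F ⊆ 𝔠 with e = ⋃_{x ∈ F} x𝔠. -/
open CategoryTheory

variable {C : Type*} [Category C]

/-- The set of morphisms of the small category `C`, with domain and codomain recorded:
an element `⟨a, b, f⟩` is a morphism `f` with `𝔡 = a` and `𝔱 = b`. -/
abbrev Mor (C : Type*) [Category C] := Σ (a b : C), a ⟶ b

/-- The principal right ideal `x𝔠 = {xy : y ∈ 𝔡(x)𝔠}`. -/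
def princ (x : Mor C) : Set (Mor C) :=
  {z | ∃ (c : C) (g : c ⟶ x.1), z = ⟨c, x.2.1, g ≫ x.2.2⟩}

/-- The right ideal `𝔳𝔠 = {x : 𝔱(x) = 𝔳}`. -/
def objIdeal (v : C) : Set (Mor C) := {z | z.2.1 = v}

/-- Image of a subset `e ⊆ 𝔠` under left multiplication by `c`. -/
def mulSet (c : Mor C) (e : Set (Mor C)) : Set (Mor C) :=
  {z | ∃ (w : C) (g : w ⟶ c.1), (⟨w, c.1, g⟩ : Mor C) ∈ e ∧ z = ⟨w, c.2.1, g ≫ c.2.2⟩}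

/-- Preimage of a subset `e ⊆ 𝔠` under left multiplication by `c`. -/
def divSet (c : Mor C) (e : Set (Mor C)) : Set (Mor C) :=
  {z | ∃ (w : C) (g : w ⟶ c.1), z = ⟨w, c.1, g⟩ ∧ (⟨w, c.2.1, g ≫ c.2.2⟩ : Mor C) ∈ e}

/-- The constructible right ideals of `𝔠`: the domains/images of elements of the left
inverse hull `I_l`, i.e. the smallest family of subsets containing all `𝔳𝔠` and closed
under images and preimages of the left multiplication maps.  This family is the
semilattice `𝒥` of idempotents of `I_l` (product = intersection, order = inclusion). -/
inductive IsConstructible : Set (Mor C) → Prop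
  | base (v : C) : IsConstructible (objIdeal v)
  | mul (c : Mor C) {e : Set (Mor C)} : IsConstructible e → IsConstructible (mulSet c e)
  | div (c : Mor C) {e : Set (Mor C)} : IsConstructible e → IsConstructible (divSet c e)

lemma mem_princ_self (x : Mor C) : x ∈ princ x := by
  obtain ⟨a, b, f⟩ := x
  exact ⟨a, 𝟙 a, by simp [Category.id_comp]⟩

lemma mulSet_princ (c x : Mor C) :
    ∃ F : Finset (Mor C), mulSet c (princ x) = ⋃ y ∈ F, princ y := by
  obtain ⟨a, b, f⟩ := x
  obtain ⟨b', v, k⟩ := c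
  by_cases h : b = b'
  · subst h
    refine ⟨{⟨a, v, f ≫ k⟩}, ?_⟩
    ext z
    simp only [mulSet, princ, Set.mem_setOf_eq, Finset.mem_singleton, Set.mem_iUnion,
      Set.iUnion_iUnion_eq_left]
    constructor
    · rintro ⟨w, g, ⟨c', g', hz⟩, rfl⟩
      obtain ⟨rfl, h2⟩ := Sigma.mk.inj_iff.mp hz
      obtain ⟨-, h3⟩ := Sigma.mk.inj_iff.mp (eq_of_heq h2)
      obtain rfl := eq_of_heq h3
      exact ⟨w, g', by simp⟩
    · rintro ⟨w, g, rfl⟩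
      exact ⟨w, g ≫ f, ⟨w, g, rfl⟩, by simp⟩
  · refine ⟨∅, ?_⟩
    ext z
    simp only [mulSet, princ, Set.mem_setOf_eq, Finset.notMem_empty, Set.mem_iUnion,
      Set.iUnion_of_empty, Set.iUnion_empty, Set.mem_empty_iff_false, iff_false]
    rintro ⟨w, g, ⟨c', g', hz⟩, rfl⟩
    obtain ⟨rfl, h2⟩ := Sigma.mk.inj_iff.mp hz
    exact h (Sigma.mk.inj_iff.mp (eq_of_heq h2)).1.symm

lemma divSet_princ (hmono : ∀ {a b : C} (f : a ⟶ b), Mono f)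
    (hFA : ∀ a b : Mor C, ∃ F : Finset (Mor C), princ a ∩ princ b = ⋃ c ∈ F, princ c)
    (c x : Mor C) :
    ∃ F : Finset (Mor C), divSet c (princ x) = ⋃ y ∈ F, princ y := by
  classical
  obtain ⟨F, hF⟩ := hFA c x
  have hmem : ∀ d ∈ F, d ∈ princ c ∩ princ x := by
    intro d hd
    rw [hF]
    exact Set.mem_biUnion hd (mem_princ_self d)
  -- for each d ∈ F choose d' with d = c * d'
  have hch : ∀ d : Mor C, d ∈ F → ∃ d' : Mor C,
      (∀ z : Mor C, z ∈ princ d' ↔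
        (∃ (w : C) (g : w ⟶ c.1), z = ⟨w, c.1, g⟩ ∧
          (⟨w, c.2.1, g ≫ c.2.2⟩ : Mor C) ∈ princ d)) := by
    intro d hd
    obtain ⟨w₀, g₀, hd'⟩ := (hmem d hd).1
    refine ⟨⟨w₀, c.1, g₀⟩, ?_⟩
    intro z
    constructor
    · rintro ⟨w, y, rfl⟩
      refine ⟨w, y ≫ g₀, rfl, ?_⟩
      rw [hd']
      exact ⟨w, y, by simp⟩
    · rintro ⟨w, g, rfl, hg⟩
      rw [hd'] at hg
      obtain ⟨w', y, hz⟩ := hg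
      obtain ⟨rfl, h2⟩ := Sigma.mk.inj_iff.mp hz
      obtain ⟨-, h3⟩ := Sigma.mk.inj_iff.mp (eq_of_heq h2)
      have h4 : g ≫ c.2.2 = (y ≫ g₀) ≫ c.2.2 := by
        rw [eq_of_heq h3]; simp
      have := hmono c.2.2
      have h5 : g = y ≫ g₀ := by
        exact (cancel_mono c.2.2).mp h4
      exact ⟨w, y, by rw [h5]⟩
  choose f hf3 using hch
  refine ⟨F.attach.image (fun d => f d.1 d.2), ?_⟩
  ext z
  simp only [divSet, Set.mem_setOf_eq, Set.mem_iUnion, Finset.mem_image, Finset.mem_attach,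
    true_and, Subtype.exists, exists_prop]
  constructor
  · rintro ⟨w, g, rfl, hg⟩
    have : (⟨w, c.2.1, g ≫ c.2.2⟩ : Mor C) ∈ princ c ∩ princ x := ⟨⟨w, g, rfl⟩, hg⟩
    rw [hF] at this
    obtain ⟨d, hd, hmemd⟩ := Set.mem_iUnion₂.mp this
    exact ⟨f d hd, ⟨d, hd, rfl⟩, (hf3 d hd _).mpr ⟨w, g, rfl, hmemd⟩⟩
  · rintro ⟨y, ⟨d, hd, rfl⟩, hz⟩
    obtain ⟨w, g, rfl, hg⟩ := (hf3 d hd z).mp hz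
    refine ⟨w, g, rfl, ?_⟩
    have : (⟨w, c.2.1, g ≫ c.2.2⟩ : Mor C) ∈ princ c ∩ princ x := by
      rw [hF]; exact Set.mem_biUnion hd hg
    exact this.2

/-- If `𝔠` is a finitely aligned left cancellative small category, then every
constructible right ideal `e ∈ 𝒥` is a finite union of principal right ideals. -/
theorem constructible_eq_finite_union_princ (hmono : ∀ {a b : C} (f : a ⟶ b), Mono f)
    (hFA : ∀ a b : Mor C, ∃ F : Finset (Mor C), princ a ∩ princ b = ⋃ c ∈ F, princ c)
    (e : Set (Mor C)) (he : IsConstructible e) :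
    ∃ F : Finset (Mor C), e = ⋃ x ∈ F, princ x := by
  classical
  induction he with
  | base v =>
    refine ⟨{⟨v, v, 𝟙 v⟩}, ?_⟩
    ext z
    obtain ⟨a, b, f⟩ := z
    simp only [objIdeal, princ, Set.mem_setOf_eq, Finset.mem_singleton, Set.mem_iUnion,
      Set.iUnion_iUnion_eq_left]
    constructor
    · rintro rfl
      exact ⟨a, f, by simp⟩
    · rintro ⟨w, g, hz⟩
      obtain ⟨rfl, h2⟩ := Sigma.mk.inj_iff.mp hz
      exact (Sigma.mk.inj_iff.mp (eq_of_heq h2)).1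
  | mul c he ih =>
    obtain ⟨F, rfl⟩ := ih
    choose G hG using fun x => mulSet_princ c x
    refine ⟨F.biUnion G, ?_⟩
    have hdist : mulSet c (⋃ x ∈ F, princ x) = ⋃ x ∈ F, mulSet c (princ x) := by
      ext z
      simp only [mulSet, Set.mem_setOf_eq, Set.mem_iUnion]
      tauto
    rw [hdist]
    ext z
    simp only [Set.mem_iUnion, Finset.mem_biUnion, exists_prop]
    constructor
    · rintro ⟨x, hx, hz⟩
      rw [hG x] at hz
      obtain ⟨y, hy, hzy⟩ := Set.mem_iUnion₂.mp hz
      exact ⟨y, ⟨x, hx, hy⟩, hzy⟩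
    · rintro ⟨y, ⟨x, hx, hy⟩, hz⟩
      refine ⟨x, hx, ?_⟩
      rw [hG x]
      exact Set.mem_biUnion hy hz
  | div c he ih =>
    obtain ⟨F, rfl⟩ := ih
    choose G hG using fun x => divSet_princ hmono hFA c x
    refine ⟨F.biUnion G, ?_⟩
    have hdist : divSet c (⋃ x ∈ F, princ x) = ⋃ x ∈ F, divSet c (princ x) := by
      ext z
      simp only [divSet, Set.mem_setOf_eq, Set.mem_iUnion]
      tauto
    rw [hdist]
    ext z
    simp only [Set.mem_iUnion, Finset.mem_biUnion, exists_prop]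
    constructor
    · rintro ⟨x, hx, hz⟩
      rw [hG x] at hz
      obtain ⟨y, hy, hzy⟩ := Set.mem_iUnion₂.mp hz
      exact ⟨y, ⟨x, hx, hy⟩, hzy⟩
    · rintro ⟨y, ⟨x, hx, hy⟩, hz⟩
      refine ⟨x, hx, ?_⟩
      rw [hG x]
      exact Set.mem_biUnion hy hz
end

section
/- If 𝔠 is a finitely aligned left cancellative small category, then every element s of the left inverse hull I_l is a finite union of partial bijections of the form c d⁻¹ with c, d ∈ 𝔠 and 𝔡(c) = 𝔡(d); that is, s equals the union (as a partial bijection) of finitely many maps dx ↦ cx. -/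
open CategoryTheory

variable {C : Type*} [Category C]

open Classical in
/-- The left multiplication map by `c`, as a partial map `𝔡(c)𝔠 → c𝔠`, `x ↦ cx`. -/
noncomputable def leftMulFun (c : Mor C) : Mor C → Option (Mor C) :=
  fun y =>
    if h : y.2.1 = c.1 then some ⟨y.1, c.2.1, y.2.2 ≫ eqToHom h ≫ c.2.2⟩ else none

open Classical in
/-- The inverse of the left multiplication map by `c`, as a partial map `c𝔠 → 𝔡(c)𝔠`. -/
noncomputable def leftDivFun (c : Mor C) : Mor C → Option (Mor C) :=
  fun z =>
    if h : ∃ (w : C) (g : w ⟶ c.1), z = ⟨w, c.2.1, g ≫ c.2.2⟩ then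
      some ⟨h.choose, c.1, h.choose_spec.choose⟩
    else none

/-- Composition of partial maps. -/
def pcomp (f g : Mor C → Option (Mor C)) : Mor C → Option (Mor C) :=
  fun x => (g x).bind f

/-- The left inverse hull `I_l` of `𝔠`: the inverse semigroup of partial bijections of `𝔠`
generated by the left multiplication maps `c` (and their inverses). -/
inductive InIl : (Mor C → Option (Mor C)) → Prop
  | mul (c : Mor C) : InIl (leftMulFun c)
  | div (c : Mor C) : InIl (leftDivFun c)
  | comp {s t : Mor C → Option (Mor C)} : InIl s → InIl t → InIl (pcomp s t)

section AuxLemmas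
variable {C : Type*} [Category C]

lemma mor_mk_eq_mk {w w' v v' : C} {f : w ⟶ v} {f' : w' ⟶ v'} :
    (⟨w, v, f⟩ : Mor C) = ⟨w', v', f'⟩ ↔ ∃ (_ : w = w') (_ : v = v'), HEq f f' := by
  constructor
  · intro h
    rw [Sigma.ext_iff] at h
    obtain ⟨h1, h2⟩ := h
    dsimp at h1 h2
    subst h1
    rw [heq_eq_eq, Sigma.ext_iff] at h2
    obtain ⟨h2, h3⟩ := h2
    dsimp at h2 h3
    subst h2
    exact ⟨rfl, rfl, h3⟩
  · rintro ⟨rfl, rfl, h⟩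
    rw [eq_of_heq h]

/-- `c d⁻¹` as a partial map, for a pair `(c, d)`. -/
noncomputable def repFun (p : Mor C × Mor C) : Mor C → Option (Mor C) :=
  pcomp (leftMulFun p.1) (leftDivFun p.2)

lemma leftMulFun_eq_some {c y z' : Mor C} :
    leftMulFun c y = some z' ↔
      ∃ (w : C) (g : w ⟶ c.1), y = ⟨w, c.1, g⟩ ∧ z' = ⟨w, c.2.1, g ≫ c.2.2⟩ := by
  obtain ⟨y1, y2, yf⟩ := y
  unfold leftMulFun
  dsimp only
  split_ifs with h
  · subst h
    simp only [eqToHom_refl, Category.id_comp, Option.some.injEq]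
    constructor
    · rintro rfl
      exact ⟨y1, yf, rfl, rfl⟩
    · rintro ⟨w, g, hy, rfl⟩
      obtain ⟨h1, -, h3⟩ := mor_mk_eq_mk.mp hy
      subst h1
      rw [eq_of_heq h3]
  · constructor
    · intro h'; simp at h'
    · rintro ⟨w, g, hy, -⟩
      obtain ⟨-, h2, -⟩ := mor_mk_eq_mk.mp hy
      exact absurd h2 h

lemma leftDivFun_eq_some (hmono : ∀ {a b : C} (f : a ⟶ b), Mono f) {d z y : Mor C} :
    leftDivFun d z = some y ↔
      ∃ (w : C) (g : w ⟶ d.1), z = ⟨w, d.2.1, g ≫ d.2.2⟩ ∧ y = ⟨w, d.1, g⟩ := by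
  unfold leftDivFun
  split_ifs with h
  · simp only [Option.some.injEq]
    constructor
    · rintro rfl
      exact ⟨h.choose, h.choose_spec.choose, h.choose_spec.choose_spec, rfl⟩
    · rintro ⟨w, g, hz, rfl⟩
      have key := hz.symm.trans h.choose_spec.choose_spec
      obtain ⟨h1, -, h3⟩ := mor_mk_eq_mk.mp key
      subst h1
      haveI := hmono d.2.2
      have hg : g = h.choose_spec.choose := (cancel_mono d.2.2).mp (eq_of_heq h3)
      exact mor_mk_eq_mk.mpr ⟨rfl, rfl, heq_of_eq hg.symm⟩
  · constructor
    · intro h'; simp at h'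
    · rintro ⟨w, g, hz, -⟩
      exact absurd ⟨w, g, hz⟩ h

lemma repFun_eq_some (hmono : ∀ {a b : C} (f : a ⟶ b), Mono f)
    {c1 c2 d2 : C} (cf : c1 ⟶ c2) (df : c1 ⟶ d2) {z z' : Mor C} :
    repFun (⟨c1, c2, cf⟩, ⟨c1, d2, df⟩) z = some z' ↔
      ∃ (w : C) (g : w ⟶ c1), z = ⟨w, d2, g ≫ df⟩ ∧ z' = ⟨w, c2, g ≫ cf⟩ := by
  unfold repFun pcomp
  rw [Option.bind_eq_some_iff]
  constructor
  · rintro ⟨y, hy, hz'⟩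
    rw [leftDivFun_eq_some hmono] at hy
    rw [leftMulFun_eq_some] at hz'
    obtain ⟨w, g, hz, rfl⟩ := hy
    obtain ⟨w', g', hy', rfl⟩ := hz'
    obtain ⟨h1, -, h3⟩ := mor_mk_eq_mk.mp hy'
    subst h1
    rw [← eq_of_heq h3]
    exact ⟨w, g, hz, rfl⟩
  · rintro ⟨w, g, hz, rfl⟩
    refine ⟨⟨w, c1, g⟩, ?_, ?_⟩
    · rw [leftDivFun_eq_some hmono]; exact ⟨w, g, hz, rfl⟩
    · rw [leftMulFun_eq_some]; exact ⟨w, g, rfl, rfl⟩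

end AuxLemmas

section PairCover
variable {C : Type*} [Category C]

lemma mul_congr {c0 : C} {m m' : Mor C} (h : m = m') (hfst : m.1 = m'.1) (x : c0 ⟶ m.1) :
    (⟨c0, m.2.1, x ≫ m.2.2⟩ : Mor C) = ⟨c0, m'.2.1, (x ≫ eqToHom hfst) ≫ m'.2.2⟩ := by
  subst h
  simp

lemma pair_cover (hmono : ∀ {a b : C} (f : a ⟶ b), Mono f)
    (hFA : ∀ a b : Mor C, ∃ F : Finset (Mor C), princ a ∩ princ b = ⋃ c ∈ F, princ c)
    {c1 c2 d2 a1 a2 b2 : C} (cf : c1 ⟶ c2) (df : c1 ⟶ d2) (af : a1 ⟶ a2) (bf : a1 ⟶ b2) :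
    ∃ L : List (Mor C × Mor C), (∀ r ∈ L, r.1.1 = r.2.1) ∧ ∀ z z' : Mor C,
      ((∃ y, repFun (⟨a1, a2, af⟩, ⟨a1, b2, bf⟩) z = some y ∧
        repFun (⟨c1, c2, cf⟩, ⟨c1, d2, df⟩) y = some z') ↔
      ∃ r ∈ L, repFun r z = some z') := by
  obtain ⟨F, hF⟩ := hFA ⟨a1, a2, af⟩ ⟨c1, d2, df⟩
  have hmem : ∀ p ∈ F, ∃ (w : C) (u : w ⟶ a1) (v : w ⟶ c1),
      p = ⟨w, a2, u ≫ af⟩ ∧ p = ⟨w, d2, v ≫ df⟩ := by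
    intro p hp
    have hpp : p ∈ princ (⟨a1, a2, af⟩ : Mor C) ∩ princ (⟨c1, d2, df⟩ : Mor C) := by
      rw [hF]
      refine Set.mem_iUnion₂.mpr ⟨p, hp, ⟨p.1, 𝟙 p.1, ?_⟩⟩
      rw [Category.id_comp]
    obtain ⟨wa, u0, hu0⟩ := hpp.1
    obtain ⟨wc, v0, hv0⟩ := hpp.2
    obtain ⟨h1, -, -⟩ := mor_mk_eq_mk.mp (hu0.symm.trans hv0)
    subst h1
    exact ⟨wa, u0, v0, hu0, hv0⟩
  choose W U V hU hV using hmem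
  refine ⟨F.toList.attach.map (fun q =>
      (⟨W q.1 (Finset.mem_toList.mp q.2), c2, V q.1 (Finset.mem_toList.mp q.2) ≫ cf⟩,
       ⟨W q.1 (Finset.mem_toList.mp q.2), b2, U q.1 (Finset.mem_toList.mp q.2) ≫ bf⟩)),
    ?_, ?_⟩
  · intro r hr
    obtain ⟨q, -, rfl⟩ := List.mem_map.mp hr
    rfl
  · intro z z'
    constructor
    · rintro ⟨y, hq, hp⟩
      rw [repFun_eq_some hmono] at hq hp
      obtain ⟨wz, g, rfl, rfl⟩ := hq
      obtain ⟨wz', g', hy', rfl⟩ := hp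
      obtain ⟨h1, h2, h3⟩ := mor_mk_eq_mk.mp hy'
      subst h1
      subst h2
      have h3e : g ≫ af = g' ≫ df := eq_of_heq h3
      have hym : (⟨wz, a2, g ≫ af⟩ : Mor C) ∈
          princ (⟨a1, a2, af⟩ : Mor C) ∩ princ (⟨c1, a2, df⟩ : Mor C) :=
        ⟨⟨wz, g, rfl⟩, ⟨wz, g', by rw [h3e]⟩⟩
      rw [hF] at hym
      obtain ⟨p, hpF, c0, x, hx⟩ := Set.mem_iUnion₂.mp hym
      have hu := hU p hpF
      have hv := hV p hpF
      have hfst : p.1 = W p hpF := congrArg Sigma.fst hu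
      have keyu := hx.trans (mul_congr hu hfst x)
      have keyv := hx.trans (mul_congr hv hfst x)
      obtain ⟨hwc, -, hgu⟩ := mor_mk_eq_mk.mp keyu
      subst hwc
      obtain ⟨-, -, hgv⟩ := mor_mk_eq_mk.mp keyv
      haveI := hmono af
      haveI := hmono df
      have hgu' : g = (x ≫ eqToHom hfst) ≫ U p hpF := by
        apply (cancel_mono af).mp
        rw [eq_of_heq hgu]
        simp
      have hgv' : g' = (x ≫ eqToHom hfst) ≫ V p hpF := by
        apply (cancel_mono df).mp
        rw [← h3e, eq_of_heq hgv]
        simp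
      refine ⟨(⟨W p hpF, c2, V p hpF ≫ cf⟩, ⟨W p hpF, b2, U p hpF ≫ bf⟩),
        List.mem_map.mpr ⟨⟨p, Finset.mem_toList.mpr hpF⟩, List.mem_attach _ _, rfl⟩, ?_⟩
      rw [repFun_eq_some hmono]
      refine ⟨wz, x ≫ eqToHom hfst, ?_, ?_⟩
      · rw [hgu', Category.assoc]
      · rw [hgv', Category.assoc]
    · rintro ⟨r, hrM, hrz⟩
      obtain ⟨⟨p, hpL⟩, -, rfl⟩ := List.mem_map.mp hrM
      set hpF := Finset.mem_toList.mp hpL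
      have hu := hU p hpF
      have hv := hV p hpF
      rw [repFun_eq_some hmono] at hrz
      obtain ⟨w0, g0, rfl, rfl⟩ := hrz
      obtain ⟨-, h2, h3⟩ := mor_mk_eq_mk.mp (hu.symm.trans hv)
      subst h2
      have h3e : U p hpF ≫ af = V p hpF ≫ df := eq_of_heq h3
      refine ⟨⟨w0, a2, (g0 ≫ U p hpF) ≫ af⟩, ?_, ?_⟩
      · rw [repFun_eq_some hmono]
        exact ⟨w0, g0 ≫ U p hpF, by rw [Category.assoc], rfl⟩
      · rw [repFun_eq_some hmono]
        refine ⟨w0, g0 ≫ V p hpF, ?_, by rw [Category.assoc]⟩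
        rw [Category.assoc, Category.assoc, h3e]
end PairCover

section Assembly
variable {C : Type*} [Category C]

lemma pair_cover' (hmono : ∀ {a b : C} (f : a ⟶ b), Mono f)
    (hFA : ∀ a b : Mor C, ∃ F : Finset (Mor C), princ a ∩ princ b = ⋃ c ∈ F, princ c)
    (p q : Mor C × Mor C) (hp : p.1.1 = p.2.1) (hq : q.1.1 = q.2.1) :
    ∃ L : List (Mor C × Mor C), (∀ r ∈ L, r.1.1 = r.2.1) ∧ ∀ z z' : Mor C,
      ((∃ y, repFun q z = some y ∧ repFun p y = some z') ↔
        ∃ r ∈ L, repFun r z = some z') := by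
  obtain ⟨⟨pc1, pc2, pcf⟩, ⟨pd1, pd2, pdf⟩⟩ := p
  obtain ⟨⟨qa1, qa2, qaf⟩, ⟨qb1, qb2, qbf⟩⟩ := q
  dsimp at hp hq
  subst hp
  subst hq
  exact pair_cover hmono hFA pcf pdf qaf qbf

lemma inIl_cover (hmono : ∀ {a b : C} (f : a ⟶ b), Mono f)
    (hFA : ∀ a b : Mor C, ∃ F : Finset (Mor C), princ a ∩ princ b = ⋃ c ∈ F, princ c)
    {s : Mor C → Option (Mor C)} (hs : InIl s) :
    ∃ L : List (Mor C × Mor C), (∀ p ∈ L, p.1.1 = p.2.1) ∧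
      ∀ z z' : Mor C, (s z = some z' ↔ ∃ p ∈ L, repFun p z = some z') := by
  induction hs with
  | mul c =>
      obtain ⟨c1, c2, cf⟩ := c
      refine ⟨[(⟨c1, c2, cf⟩, ⟨c1, c1, 𝟙 c1⟩)], by simp, fun z z' => ?_⟩
      rw [leftMulFun_eq_some]
      simp only [List.mem_singleton, exists_eq_left]
      rw [repFun_eq_some hmono]
      simp
  | div c =>
      obtain ⟨c1, c2, cf⟩ := c
      refine ⟨[(⟨c1, c1, 𝟙 c1⟩, ⟨c1, c2, cf⟩)], by simp, fun z z' => ?_⟩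
      rw [leftDivFun_eq_some hmono]
      simp only [List.mem_singleton, exists_eq_left]
      rw [repFun_eq_some hmono]
      simp
  | comp hs' ht' ihs iht =>
      obtain ⟨Ls, hs1, hs2⟩ := ihs
      obtain ⟨Lt, ht1, ht2⟩ := iht
      choose G hG1 hG2 using fun (p q : Mor C × Mor C) (hp : p.1.1 = p.2.1)
        (hq : q.1.1 = q.2.1) => pair_cover' hmono hFA p q hp hq
      refine ⟨Ls.attach.flatMap (fun p => Lt.attach.flatMap
        (fun q => G p.1 q.1 (hs1 p.1 p.2) (ht1 q.1 q.2))), ?_, ?_⟩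
      · intro r hr
        simp only [List.mem_flatMap] at hr
        obtain ⟨p, -, q, -, hr⟩ := hr
        exact hG1 _ _ _ _ r hr
      · intro z z'
        show (_ : Option (Mor C)).bind _ = _ ↔ _
        rw [Option.bind_eq_some_iff]
        constructor
        · rintro ⟨y, hty, hsy⟩
          rw [ht2] at hty
          rw [hs2] at hsy
          obtain ⟨q, hqL, hqy⟩ := hty
          obtain ⟨p, hpL, hpz⟩ := hsy
          obtain ⟨r, hrG, hrz⟩ :=
            (hG2 p q (hs1 p hpL) (ht1 q hqL) z z').mp ⟨y, hqy, hpz⟩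
          refine ⟨r, ?_, hrz⟩
          simp only [List.mem_flatMap]
          exact ⟨⟨p, hpL⟩, List.mem_attach _ _, ⟨q, hqL⟩, List.mem_attach _ _, hrG⟩
        · rintro ⟨r, hrM, hrz⟩
          simp only [List.mem_flatMap] at hrM
          obtain ⟨⟨p, hpL⟩, -, ⟨q, hqL⟩, -, hrG⟩ := hrM
          obtain ⟨y, hqy, hpz⟩ :=
            (hG2 p q (hs1 p hpL) (ht1 q hqL) z z').mpr ⟨r, hrG, hrz⟩
          exact ⟨y, (ht2 z y).mpr ⟨q, hqL, hqy⟩, (hs2 y z').mpr ⟨p, hpL, hpz⟩⟩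
end Assembly

/-- If `𝔠` is a finitely aligned left cancellative small category, then every `s ∈ I_l`
is a finite union of partial bijections of the form `c d⁻¹` with `𝔡(c) = 𝔡(d)`:
`s` equals the union, as a partial bijection, of finitely many maps `dx ↦ cx`. -/
theorem Il_eq_finite_union_cdinv (hmono : ∀ {a b : C} (f : a ⟶ b), Mono f)
    (hFA : ∀ a b : Mor C, ∃ F : Finset (Mor C), princ a ∩ princ b = ⋃ c ∈ F, princ c)
    (s : Mor C → Option (Mor C)) (hs : InIl s) :
    ∃ (n : ℕ) (c d : Fin n → Mor C), (∀ i, (c i).1 = (d i).1) ∧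
      ∀ z z' : Mor C,
        (s z = some z' ↔ ∃ i, pcomp (leftMulFun (c i)) (leftDivFun (d i)) z = some z') := by
  obtain ⟨L, hL1, hL2⟩ := inIl_cover hmono hFA hs
  refine ⟨L.length, fun i => (L.get i).1, fun i => (L.get i).2,
    fun i => hL1 _ (L.get_mem i), fun z z' => ?_⟩
  rw [hL2]
  constructor
  · rintro ⟨p, hpL, hp⟩
    obtain ⟨i, rfl⟩ := List.mem_iff_get.mp hpL
    exact ⟨i, hp⟩
  · rintro ⟨i, hi⟩
    exact ⟨L.get i, L.get_mem i, hi⟩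
end

section
/- Let S be an inverse semigroup with zero acting on the space of tight characters ∂Ê of its idempotent semilattice E. Then S^c ⋉ ∂Ê ⊆ Iso(S ⋉ ∂Ê): for every s ∈ S^c and every tight character χ with χ(s⁻¹s) = 1, we have s.χ = χ. -/
/-- A character of the idempotent semilattice `E` of `S`: a `{0,1}`-valued map on the
idempotents which is nonzero, kills `0`, and is multiplicative. -/
def IsEChar {S : Type*} [InverseSemigroupWithZero S] (χ : S → Prop) : Prop :=
  (∃ e : S, e * e = e ∧ χ e) ∧ ¬ χ 0 ∧
    ∀ e f : S, e * e = e → f * f = f → (χ (e * f) ↔ χ e ∧ χ f)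

/-- A maximal character: its filter `χ⁻¹(1)` is maximal among filters of characters. -/
def IsMaxEChar {S : Type*} [InverseSemigroupWithZero S] (χ : S → Prop) : Prop :=
  IsEChar χ ∧ ∀ ψ : S → Prop, IsEChar ψ → (∀ e : S, e * e = e → χ e → ψ e) →
    ∀ e : S, e * e = e → ψ e → χ e

/-- A tight character: a character lying in the closure of the set of maximal characters
for the topology of pointwise convergence, expressed via finite conditions. -/
def IsTightEChar {S : Type*} [InverseSemigroupWithZero S] (χ : S → Prop) : Prop :=
  IsEChar χ ∧ ∀ A B : Finset S, (∀ e ∈ A, e * e = e) → (∀ f ∈ B, f * f = f) →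
    (∀ e ∈ A, χ e) → (∀ f ∈ B, ¬ χ f) →
      ∃ ψ : S → Prop, IsMaxEChar ψ ∧ (∀ e ∈ A, ψ e) ∧ (∀ f ∈ B, ¬ ψ f)

namespace ScProofAux

variable {S : Type*} [InverseSemigroupWithZero S]

lemma sis (s : S) : s * s⁻¹ * s = s := InverseSemigroupWithZero.mul_inv_mul s
lemma isi (s : S) : s⁻¹ * s * s⁻¹ = s⁻¹ := InverseSemigroupWithZero.inv_mul_inv s

lemma icomm {e f : S} (he : e * e = e) (hf : f * f = f) : e * f = f * e :=
  InverseSemigroupWithZero.idem_comm e f he hf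

lemma imul {e f : S} (he : e * e = e) (hf : f * f = f) : (e * f) * (e * f) = e * f := by
  have h1 : f * (e * f) = e * f := by
    rw [← mul_assoc, icomm hf he, mul_assoc, hf]
  rw [mul_assoc, h1, ← mul_assoc, he]

lemma ileft_comm {a b : S} (ha : a * a = a) (hb : b * b = b) (c : S) :
    a * (b * c) = b * (a * c) := by
  rw [← mul_assoc, icomm ha hb, mul_assoc]

lemma ba_idem {a b : S} (hab : a * b * a = a) : (a * b) * (a * b) = a * b := by
  rw [← mul_assoc, hab]

lemma d_idem (s : S) : (s⁻¹ * s) * (s⁻¹ * s) = s⁻¹ * s := ba_idem (isi s)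

lemma c_idem (s : S) : (s * s⁻¹) * (s * s⁻¹) = s * s⁻¹ := ba_idem (sis s)

lemma gen_conj_mul {a b : S} (hba : b * a * b = b) {e f : S} (hf : f * f = f) :
    (a * e * b) * (a * f * b) = a * (e * f) * b := by
  have key : b * (a * f * b) = f * b := by
    rw [mul_assoc a f b, ← mul_assoc b a, ← mul_assoc, icomm (ba_idem hba) hf,
      mul_assoc, hba]
  rw [mul_assoc (a * e) b, key, mul_assoc a e (f * b), ← mul_assoc e f b,
    ← mul_assoc a (e * f) b]

lemma conj_mul (s : S) {e f : S} (hf : f * f = f) :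
    (s⁻¹ * e * s) * (s⁻¹ * f * s) = s⁻¹ * (e * f) * s := gen_conj_mul (sis s) hf

lemma conj_mul' (s : S) {e f : S} (hf : f * f = f) :
    (s * e * s⁻¹) * (s * f * s⁻¹) = s * (e * f) * s⁻¹ := gen_conj_mul (isi s) hf

lemma conj_idem (s : S) {e : S} (he : e * e = e) :
    (s⁻¹ * e * s) * (s⁻¹ * e * s) = s⁻¹ * e * s := by rw [conj_mul s he, he]

lemma conj_idem' (s : S) {e : S} (he : e * e = e) :
    (s * e * s⁻¹) * (s * e * s⁻¹) = s * e * s⁻¹ := by rw [conj_mul' s he, he]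

lemma gen_out {a b : S} (hab : a * b * a = a) {e : S} (he : e * e = e) :
    a * (b * e * a) * b = e * (a * b) := by
  rw [← mul_assoc a (b * e) a, ← mul_assoc a b e, mul_assoc ((a * b) * e) a b,
    icomm (ba_idem hab) he, mul_assoc e (a * b) (a * b), ba_idem hab]

lemma conj_out (s : S) {e : S} (he : e * e = e) :
    s * (s⁻¹ * e * s) * s⁻¹ = e * (s * s⁻¹) := gen_out (sis s) he

lemma gen_le {a b : S} (hab : a * b * a = a) (e : S) :
    (b * e * a) * (b * a) = b * e * a := by
  rw [mul_assoc (b * e) a (b * a), ← mul_assoc a b a, hab]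

lemma absorb (s x : S) : s * (x * (s⁻¹ * s)) * s⁻¹ = s * x * s⁻¹ := by
  rw [← mul_assoc s x (s⁻¹ * s), mul_assoc (s * x) (s⁻¹ * s) s⁻¹, isi]

lemma final_A {e f d k h : S} (hd : d * d = d) (hk : k * k = k) (hh : h * h = h)
    (hf : f * f = f) (h3 : e * h = 0) : ((e * f) * d) * (k * h) = 0 := by
  simp only [mul_assoc]
  rw [icomm hk hh, ileft_comm hd hh k, ileft_comm hf hh (d * k),
    ← mul_assoc e h (f * (d * k)), h3, zero_mul]

lemma final_B {F h d e c m : S} (hd : d * d = d) (he : e * e = e) (hhe : h * e = 0) :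
    ((F * h) * d) * ((e * c) * m) = 0 := by
  simp only [mul_assoc]
  rw [ileft_comm hd he (c * m), ← mul_assoc h e (d * (c * m)), hhe, zero_mul, mul_zero]

/-- Separation property of maximal characters: if `ψ` is maximal and `ψ e = 0` for an
idempotent `e`, there is an idempotent `f` in the filter of `ψ` with `e * f = 0`. -/
lemma max_sep {ψ : S → Prop} (hψ : IsMaxEChar ψ) {e : S} (he : e * e = e) (hne : ¬ ψ e) :
    ∃ f : S, f * f = f ∧ ψ f ∧ e * f = 0 := by
  by_contra hcon
  push_neg at hcon
  obtain ⟨⟨e₀, he₀, hψe₀⟩, hψ0, hmult⟩ := hψ.1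
  apply hne
  refine hψ.2 (fun x => ∃ f : S, f * f = f ∧ ψ f ∧ (e * f) * x = e * f)
    ⟨?_, ?_, ?_⟩ ?_ e he ?_
  · exact ⟨e, he, e₀, he₀, hψe₀, by rw [mul_assoc, icomm he₀ he, ← mul_assoc, he]⟩
  · rintro ⟨f, hf, hψf, hf0⟩
    rw [mul_zero] at hf0
    exact hcon f hf hψf hf0.symm
  · intro x y hx hy
    constructor
    · rintro ⟨f, hf, hψf, hfxy⟩
      constructor
      · refine ⟨f, hf, hψf, ?_⟩
        have hthis : (e * f) * ((x * y) * x) = e * f := by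
          rw [mul_assoc x y x, icomm hy hx, ← mul_assoc x x y, hx, hfxy]
        calc (e * f) * x = ((e * f) * (x * y)) * x := by rw [hfxy]
          _ = (e * f) * ((x * y) * x) := mul_assoc _ _ _
          _ = e * f := hthis
      · refine ⟨f, hf, hψf, ?_⟩
        have hthis : (e * f) * ((x * y) * y) = e * f := by
          rw [mul_assoc x y y, hy, hfxy]
        calc (e * f) * y = ((e * f) * (x * y)) * y := by rw [hfxy]
          _ = (e * f) * ((x * y) * y) := mul_assoc _ _ _
          _ = e * f := hthis
    · rintro ⟨⟨f₁, hf₁, hψf₁, h1⟩, ⟨f₂, hf₂, hψf₂, h2⟩⟩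
      refine ⟨f₁ * f₂, imul hf₁ hf₂, (hmult f₁ f₂ hf₁ hf₂).2 ⟨hψf₁, hψf₂⟩, ?_⟩
      have step1 : (e * (f₁ * f₂)) * x = e * (f₁ * f₂) := by
        simp only [← mul_assoc]
        rw [mul_assoc (e * f₁) f₂ x, icomm hf₂ hx, ← mul_assoc (e * f₁) x f₂, h1]
      have key : e * (f₁ * f₂) = f₁ * (e * f₂) := by
        rw [← mul_assoc, icomm he hf₁, mul_assoc]
      have step2 : (e * (f₁ * f₂)) * y = e * (f₁ * f₂) := by
        rw [key, mul_assoc f₁ (e * f₂) y, h2]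
      rw [← mul_assoc (e * (f₁ * f₂)) x y, step1, step2]
  · intro g hg hψg
    exact ⟨g, hg, hψg, by rw [mul_assoc, hg]⟩
  · exact ⟨e₀, he₀, hψe₀, by rw [mul_assoc, icomm he₀ he, ← mul_assoc, he]⟩

/-- The fixed-point property for maximal characters: if `s ∈ S^c`, `ψ` is maximal and
`ψ (s⁻¹ s) = 1`, then `ψ (s⁻¹ e s) = ψ e` for every idempotent `e`. -/
lemma max_fix {s : S} (hs : s ∈ Sc S) {ψ : S → Prop} (hψ : IsMaxEChar ψ)
    (hdom : ψ (s⁻¹ * s)) {e : S} (he : e * e = e) : ψ (s⁻¹ * e * s) ↔ ψ e := by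
  have hsc : ∀ g : S, g * g = g → g ≠ 0 → g * (s⁻¹ * s) = g →
      g * (s * g * s⁻¹) ≠ 0 := hs
  have hψ0 : ¬ ψ 0 := hψ.1.2.1
  have hmult := hψ.1.2.2
  constructor
  · intro hpF
    by_contra hne
    obtain ⟨h, hh, hψh, hze⟩ := max_sep hψ he hne
    have hhe : h * e = 0 := (icomm hh he).trans hze
    have hF : (s⁻¹ * e * s) * (s⁻¹ * e * s) = s⁻¹ * e * s := conj_idem s he
    have hFh : ((s⁻¹ * e * s) * h) * ((s⁻¹ * e * s) * h) = (s⁻¹ * e * s) * h := imul hF hh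
    have hg : (((s⁻¹ * e * s) * h) * (s⁻¹ * s)) * (((s⁻¹ * e * s) * h) * (s⁻¹ * s)) =
        ((s⁻¹ * e * s) * h) * (s⁻¹ * s) := imul hFh (d_idem s)
    have hψg : ψ (((s⁻¹ * e * s) * h) * (s⁻¹ * s)) :=
      (hmult _ _ hFh (d_idem s)).2 ⟨(hmult _ _ hF hh).2 ⟨hpF, hψh⟩, hdom⟩
    have hg0 : ((s⁻¹ * e * s) * h) * (s⁻¹ * s) ≠ 0 := fun h0 => hψ0 (h0 ▸ hψg)
    have hgd : (((s⁻¹ * e * s) * h) * (s⁻¹ * s)) * (s⁻¹ * s) =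
        ((s⁻¹ * e * s) * h) * (s⁻¹ * s) := by
      rw [mul_assoc ((s⁻¹ * e * s) * h) (s⁻¹ * s) (s⁻¹ * s), d_idem]
    refine hsc _ hg hg0 hgd ?_
    rw [absorb s ((s⁻¹ * e * s) * h), ← conj_mul' s hh, conj_out s he]
    exact final_B (d_idem s) he hhe
  · intro hpe
    by_contra hne
    obtain ⟨f, hf, hψf, hzero⟩ := max_sep hψ (conj_idem s he) hne
    have h1 : (s * (s⁻¹ * e * s) * s⁻¹) * (s * f * s⁻¹) = 0 := by
      rw [conj_mul' s hf, hzero, mul_zero, zero_mul]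
    have h2 : (e * (s * s⁻¹)) * (s * f * s⁻¹) = 0 := by
      rw [← conj_out s he]; exact h1
    have h3 : e * (s * f * s⁻¹) = 0 := by
      rw [← gen_le (isi s) f, icomm (conj_idem' s hf) (c_idem s),
        ← mul_assoc e (s * s⁻¹) (s * f * s⁻¹)]
      exact h2
    have hef : (e * f) * (e * f) = e * f := imul he hf
    have hg : ((e * f) * (s⁻¹ * s)) * ((e * f) * (s⁻¹ * s)) = (e * f) * (s⁻¹ * s) :=
      imul hef (d_idem s)
    have hψg : ψ ((e * f) * (s⁻¹ * s)) :=
      (hmult _ _ hef (d_idem s)).2 ⟨(hmult _ _ he hf).2 ⟨hpe, hψf⟩, hdom⟩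
    have hg0 : (e * f) * (s⁻¹ * s) ≠ 0 := fun h0 => hψ0 (h0 ▸ hψg)
    have hgd : ((e * f) * (s⁻¹ * s)) * (s⁻¹ * s) = (e * f) * (s⁻¹ * s) := by
      rw [mul_assoc (e * f) (s⁻¹ * s) (s⁻¹ * s), d_idem]
    refine hsc _ hg hg0 hgd ?_
    rw [absorb s (e * f), ← conj_mul' s hf]
    exact final_A (d_idem s) (conj_idem' s he) (conj_idem' s hf) hf h3

end ScProofAux

open ScProofAux in
/-- `S^c ⋉ ∂Ê ⊆ Iso(S ⋉ ∂Ê)`: for every `s ∈ S^c` and every tight character `χ` with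
`χ(s⁻¹s) = 1`, we have `s.χ = χ`, i.e. `χ(s⁻¹ e s) = χ(e)` for every idempotent `e`. -/
theorem Sc_fixes_tight_characters {S : Type*} [InverseSemigroupWithZero S]
    (s : S) (hs : s ∈ Sc S) (χ : S → Prop) (hχ : IsTightEChar χ) (hdom : χ (s⁻¹ * s)) :
    ∀ e : S, e * e = e → (χ (s⁻¹ * e * s) ↔ χ e) := by
  intro e he
  classical
  constructor
  · intro hces
    by_contra hne
    obtain ⟨ψ, hψmax, hA, hB⟩ :=
      hχ.2 {s⁻¹ * s, s⁻¹ * e * s} {e}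
        (by
          intro x hx
          simp only [Finset.mem_insert, Finset.mem_singleton] at hx
          rcases hx with h | h
          · subst h; exact d_idem s
          · subst h; exact conj_idem s he)
        (by intro x hx; simp only [Finset.mem_singleton] at hx; subst hx; exact he)
        (by
          intro x hx
          simp only [Finset.mem_insert, Finset.mem_singleton] at hx
          rcases hx with h | h
          · subst h; exact hdom
          · subst h; exact hces)
        (by intro x hx; simp only [Finset.mem_singleton] at hx; subst hx; exact hne)
    exact hB e (Finset.mem_singleton_self e)
      ((max_fix hs hψmax (hA _ (Finset.mem_insert_self _ _)) he).1
        (hA _ (Finset.mem_insert_of_mem (Finset.mem_singleton_self _))))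
  · intro hpe
    by_contra hne
    obtain ⟨ψ, hψmax, hA, hB⟩ :=
      hχ.2 {s⁻¹ * s, e} {s⁻¹ * e * s}
        (by
          intro x hx
          simp only [Finset.mem_insert, Finset.mem_singleton] at hx
          rcases hx with h | h
          · subst h; exact d_idem s
          · subst h; exact he)
        (by intro x hx; simp only [Finset.mem_singleton] at hx; subst hx
            exact conj_idem s he)
        (by
          intro x hx
          simp only [Finset.mem_insert, Finset.mem_singleton] at hx
          rcases hx with h | h
          · subst h; exact hdom
          · subst h; exact hpe)
        (by intro x hx; simp only [Finset.mem_singleton] at hx; subst hx; exact hne)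
    exact hB _ (Finset.mem_singleton_self _)
      ((max_fix hs hψmax (hA _ (Finset.mem_insert_self _ _)) he).2
        (hA _ (Finset.mem_insert_of_mem (Finset.mem_singleton_self _))))
end

section
/- Let P ⊆ G be a submonoid of a group with G^c = {1}. If 1 ≠ g ∈ G and x ∈ P, then there exists p ∈ P with (g⁻¹xpP) ∩ (xpP) = ∅. -/
/-- Let `P ⊆ G` be a submonoid of a group with `G^c = {1}`.  If `1 ≠ g ∈ G` and `x ∈ P`,
then there exists `p ∈ P` with `(g⁻¹xpP) ∩ (xpP) = ∅`. -/
theorem exists_disjoint_translate {G : Type*} [Group G] (P : Submonoid G)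
    (hGc : ∀ g : G, (∀ p ∈ P, ∃ q₁ ∈ P, ∃ q₂ ∈ P, p * q₁ = g * (p * q₂)) → g = 1)
    (g : G) (hg : g ≠ 1) (x : G) (hx : x ∈ P) :
    ∃ p ∈ P,
      ((fun y => g⁻¹ * x * p * y) '' (P : Set G)) ∩ ((fun y => x * p * y) '' (P : Set G)) = ∅ := by
  have hh : x⁻¹ * g⁻¹ * x ≠ 1 := by
    intro h
    apply hg
    have h2 : g⁻¹ = x * (x⁻¹ * g⁻¹ * x) * x⁻¹ := by group
    rw [h] at h2
    simp at h2
    exact h2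
  have := mt (hGc (x⁻¹ * g⁻¹ * x)) hh
  push_neg at this
  obtain ⟨p, hp, hnone⟩ := this
  refine ⟨p, hp, ?_⟩
  ext z
  simp only [Set.mem_inter_iff, Set.mem_image, Set.mem_empty_iff_false, iff_false, not_and]
  rintro ⟨q₁, hq₁, rfl⟩ ⟨q₂, hq₂, heq⟩
  refine hnone q₂ hq₂ q₁ hq₁ ?_
  have h3 : p * q₂ = x⁻¹ * (x * p * q₂) := by group
  rw [heq] at h3
  rw [h3]
  group
end

section
/- Let 𝔠 be a left cancellative small category with a Garside family 𝔖 that is =*-transverse. Then every element a ∈ 𝔠 ∖ 𝔠* admits a unique normal decomposition a = s₁⋯s_l with s_k ∈ 𝔖 ∖ 𝔠* for 1 ≤ k ≤ l−1 and s_l ∈ 𝔖♯ ∖ 𝔠*. -/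
open CategoryTheory

variable {C : Type*} [Category C]

/-- `m` is an invertible element of `𝔠` (i.e. `m ∈ 𝔠*`). -/
def MInv (m : Mor C) : Prop := IsIso m.2.2

/-- The product `g · f` (g after f), defined when `𝔱(f) = 𝔡(g)`. -/
def mcomp (g f : Mor C) (h : f.2.1 = g.1) : Mor C :=
  ⟨f.1, g.2.1, f.2.2 ≫ eqToHom h ≫ g.2.2⟩

/-- `ProdEq w m`: the finite word `w = s₁ s₂ ⋯` is a path (consecutive letters are
composable) and its product equals `m`.  The empty word has the identities as products. -/
inductive ProdEq : List (Mor C) → Mor C → Prop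
  | nil (v : C) : ProdEq [] ⟨v, v, 𝟙 v⟩
  | single (s : Mor C) : ProdEq [s] s
  | cons (s : Mor C) {l : List (Mor C)} {b : Mor C} (h : ProdEq l b) (hc : b.2.1 = s.1) :
      ProdEq (s :: l) (mcomp s b hc)

/-- `a ⪯ b`: `a` is a left divisor of `b`, i.e. `b ∈ a𝔠`. -/
def ldvd (a b : Mor C) : Prop := b ∈ princ a

/-- The pair `(a, b)` is `𝔖`-normal: for every `r ∈ 𝔖`, `r ⪯ ab` implies `r ⪯ a`. -/
def NormalPair (S : Set (Mor C)) (a b : Mor C) : Prop :=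
  ∀ m : Mor C, ProdEq [a, b] m → ∀ r ∈ S, ldvd r m → ldvd r a

/-- A word is `𝔖`-normal: consecutive letters are composable and every consecutive
pair is `𝔖`-normal. -/
def IsNormalWord (S : Set (Mor C)) (w : List (Mor C)) : Prop :=
  w.Chain' (fun a b => a.1 = b.2.1 ∧ NormalPair S a b)

/-- `𝔖♯ := 𝔖𝔠* ∪ 𝔠*`. -/
def SSharp (S : Set (Mor C)) : Set (Mor C) :=
  {m | MInv m ∨ ∃ s ∈ S, ∃ u : Mor C, MInv u ∧ ∃ h : u.2.1 = s.1, m = mcomp s u h}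

/-- `𝔖` is closed under right comultiples. -/
def ClosedRightComult (S : Set (Mor C)) : Prop :=
  ∀ r ∈ S, ∀ s ∈ S, ∀ a : Mor C, ldvd r a → ldvd s a →
    ∃ t ∈ S, ldvd r t ∧ ldvd s t ∧ ldvd t a

/-- `𝔖 ∪ 𝔠*` generates `𝔠`. -/
def GeneratesWithUnits (S : Set (Mor C)) : Prop :=
  ∀ a : Mor C, ∃ w : List (Mor C), (∀ x ∈ w, x ∈ S ∨ MInv x) ∧ ProdEq w a

/-- `𝔖♯` is closed under right divisors. -/
def ClosedRightDiv (S : Set (Mor C)) : Prop :=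
  ∀ (x y : Mor C) (h : y.2.1 = x.1), mcomp x y h ∈ SSharp S → y ∈ SSharp S

/-- `𝔖` is a Garside family in `𝔠`: it is closed under right comultiples, `𝔖 ∪ 𝔠*`
generates `𝔠`, `𝔖♯` is closed under right divisors, and every element of `𝔠` admits an
`𝔖`-normal decomposition by letters of `𝔖♯`. -/
def IsGarside (S : Set (Mor C)) : Prop :=
  ClosedRightComult S ∧ GeneratesWithUnits S ∧ ClosedRightDiv S ∧
    ∀ a : Mor C, ∃ w : List (Mor C),
      (∀ x ∈ w, x ∈ SSharp S) ∧ IsNormalWord S w ∧ ProdEq w a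

/-- `𝔖` is `=*`-transverse: distinct elements of `𝔖` generate distinct principal
right ideals. -/
def Transverse (S : Set (Mor C)) : Prop :=
  ∀ s₁ ∈ S, ∀ s₂ ∈ S, princ s₁ = princ s₂ → s₁ = s₂

namespace GarsideAux

variable {S : Set (Mor C)}

/-- identity as a `Mor`. -/
def idMor (v : C) : Mor C := ⟨v, v, 𝟙 v⟩

lemma mor_ext {x y : Mor C} (h1 : x.1 = y.1) (h2 : x.2.1 = y.2.1)
    (h3 : x.2.2 = eqToHom h1 ≫ y.2.2 ≫ eqToHom h2.symm) : x = y := by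
  obtain ⟨x1, x2, xf⟩ := x
  obtain ⟨y1, y2, yf⟩ := y
  dsimp at h1 h2 h3
  subst h1; subst h2
  simp only [eqToHom_refl, Category.comp_id, Category.id_comp] at h3
  subst h3; rfl

lemma mor_eq_elim {x y : Mor C} (h : x = y) :
    ∃ (h1 : x.1 = y.1) (h2 : x.2.1 = y.2.1),
      x.2.2 = eqToHom h1 ≫ y.2.2 ≫ eqToHom h2.symm := by
  subst h; exact ⟨rfl, rfl, by simp⟩

lemma fst_eq_mcomp {r x y : Mor C} {h : y.2.1 = x.1} (he : r = mcomp x y h) :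
    r.1 = y.1 := by rw [he]; rfl

lemma tgt_eq_mcomp {r x y : Mor C} {h : y.2.1 = x.1} (he : r = mcomp x y h) :
    r.2.1 = x.2.1 := by rw [he]; rfl

@[simp] lemma mcomp_fst (x y : Mor C) (h : y.2.1 = x.1) : (mcomp x y h).1 = y.1 := rfl
@[simp] lemma mcomp_snd (x y : Mor C) (h : y.2.1 = x.1) : (mcomp x y h).2.1 = x.2.1 := rfl

lemma mcomp_congr {x x' y y' : Mor C} (hx : x = x') (hy : y = y')
    (h : y.2.1 = x.1) (h' : y'.2.1 = x'.1) : mcomp x y h = mcomp x' y' h' := by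
  subst hx; subst hy; rfl

lemma mcomp_assoc (x y z : Mor C) (h1 : y.2.1 = x.1) (h2 : z.2.1 = y.1) :
    mcomp (mcomp x y h1) z h2 = mcomp x (mcomp y z h2) h1 := by
  simp [mcomp, Category.assoc]

lemma mcomp_id_right (x : Mor C) (v : C) (h : v = x.1) :
    mcomp x (idMor v) h = x := by
  subst h
  exact mor_ext rfl rfl (by simp [mcomp, idMor]; exact (Category.id_comp _).symm)

lemma mcomp_id_left (x : Mor C) (v : C) (h : x.2.1 = v) :
    mcomp (idMor v) x h = x := by
  subst h
  exact mor_ext rfl rfl (by simp [mcomp, idMor]; exact (Category.id_comp _).symm)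

lemma minv_idMor (v : C) : MInv (idMor v) := by
  simp only [MInv, idMor]; infer_instance

lemma mcomp_cancel (hmono : ∀ {a b : C} (f : a ⟶ b), Mono f)
    {x y y' : Mor C} {h : y.2.1 = x.1} {h' : y'.2.1 = x.1}
    (he : mcomp x y h = mcomp x y' h') : y = y' := by
  obtain ⟨h1, h2, h3⟩ := mor_eq_elim he
  simp only [mcomp_fst] at h1
  refine mor_ext h1 (h.trans h'.symm) ?_
  simp only [mcomp, eqToHom_refl, Category.comp_id] at h3
  haveI := hmono x.2.2
  have h3' : (y.2.2 ≫ eqToHom h) ≫ x.2.2 = ((eqToHom h1 ≫ y'.2.2) ≫ eqToHom h') ≫ x.2.2 := by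
    simpa [Category.assoc] using h3
  have := (cancel_mono x.2.2).1 h3'
  calc y.2.2 = (y.2.2 ≫ eqToHom h) ≫ eqToHom h.symm := by simp
    _ = ((eqToHom h1 ≫ y'.2.2) ≫ eqToHom h') ≫ eqToHom h.symm := by rw [this]
    _ = eqToHom h1 ≫ y'.2.2 ≫ eqToHom (h.trans h'.symm).symm := by
        simp [Category.assoc, eqToHom_trans]

/-! ### divisibility -/

lemma ldvd_iff {x m : Mor C} :
    ldvd x m ↔ ∃ (q : Mor C) (h : q.2.1 = x.1), m = mcomp x q h := by
  constructor
  · rintro ⟨c, g, rfl⟩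
    exact ⟨⟨c, x.1, g⟩, rfl, by simp [mcomp]⟩
  · rintro ⟨q, h, rfl⟩
    exact ⟨q.1, q.2.2 ≫ eqToHom h, by simp [mcomp]⟩

lemma ldvd_mcomp (x q : Mor C) (h : q.2.1 = x.1) : ldvd x (mcomp x q h) :=
  ldvd_iff.2 ⟨q, h, rfl⟩

lemma ldvd_refl (x : Mor C) : ldvd x x :=
  ldvd_iff.2 ⟨idMor x.1, rfl, (mcomp_id_right x x.1 rfl).symm⟩

lemma ldvd_tgt {x m : Mor C} (h : ldvd x m) : m.2.1 = x.2.1 := by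
  obtain ⟨q, hq, rfl⟩ := ldvd_iff.1 h; rfl

lemma ldvd_trans {x y z : Mor C} (h1 : ldvd x y) (h2 : ldvd y z) : ldvd x z := by
  obtain ⟨q, hq, rfl⟩ := ldvd_iff.1 h1
  obtain ⟨p, hp, rfl⟩ := ldvd_iff.1 h2
  rw [mcomp_assoc x q p hq hp]
  exact ldvd_mcomp _ _ _

lemma ldvd_mcomp_mono (c : Mor C) {x y : Mor C} (hx : x.2.1 = c.1) (hy : y.2.1 = c.1)
    (h : ldvd x y) : ldvd (mcomp c x hx) (mcomp c y hy) := by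
  obtain ⟨q, hq, rfl⟩ := ldvd_iff.1 h
  rw [show mcomp c (mcomp x q hq) hy = mcomp (mcomp c x hx) q hq from
    (mcomp_assoc c x q hx hq).symm]
  exact ldvd_mcomp _ _ _

lemma ldvd_mcomp_cancel (hmono : ∀ {a b : C} (f : a ⟶ b), Mono f)
    (c : Mor C) {x y : Mor C} (hx : x.2.1 = c.1) (hy : y.2.1 = c.1)
    (h : ldvd (mcomp c x hx) (mcomp c y hy)) : ldvd x y := by
  obtain ⟨q, hq, he⟩ := ldvd_iff.1 h
  rw [mcomp_assoc c x q hx hq] at he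
  exact (mcomp_cancel hmono he) ▸ ldvd_mcomp _ _ _

lemma princ_eq_iff_ldvd {x : Mor C} {m : Mor C} : m ∈ princ x ↔ ldvd x m := Iff.rfl

lemma princ_eq_of_dvd_dvd {x y : Mor C} (h1 : ldvd x y) (h2 : ldvd y x) :
    princ x = princ y := by
  ext m
  exact ⟨fun hm => ldvd_trans h2 hm, fun hm => ldvd_trans h1 hm⟩

/-! ### invertible elements -/

noncomputable def minv' (u : Mor C) (hu : MInv u) : Mor C :=
  ⟨u.2.1, u.1, @CategoryTheory.inv _ _ _ _ u.2.2 hu⟩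

@[simp] lemma minv'_fst (u : Mor C) (hu : MInv u) : (minv' u hu).1 = u.2.1 := rfl
@[simp] lemma minv'_snd (u : Mor C) (hu : MInv u) : (minv' u hu).2.1 = u.1 := rfl

lemma minv_minv' (u : Mor C) (hu : MInv u) : MInv (minv' u hu) := by
  simp only [MInv, minv']
  exact @IsIso.inv_isIso _ _ _ _ _ hu

lemma mcomp_minv'_mcomp (u : Mor C) (hu : MInv u) (r : Mor C) (h : r.2.1 = u.2.1) :
    mcomp u (mcomp (minv' u hu) r h) rfl = r := by
  obtain ⟨r1, r2, rf⟩ := r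
  dsimp at h; subst h
  refine mor_ext rfl rfl ?_
  haveI : IsIso u.2.2 := hu
  change IsIso u.2.2 at hu
  dsimp only [mcomp, minv']
  simp
  exact (by simp : rf = 𝟙 _ ≫ rf ≫ 𝟙 _)

lemma minv'_mcomp_mcomp (u : Mor C) (hu : MInv u) (r : Mor C) (h : r.2.1 = u.1) :
    mcomp (minv' u hu) (mcomp u r h) rfl = r := by
  obtain ⟨r1, r2, rf⟩ := r
  dsimp at h; subst h
  refine mor_ext rfl rfl ?_
  haveI : IsIso u.2.2 := hu
  change IsIso u.2.2 at hu
  dsimp only [mcomp, minv']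
  simp
  exact (by simp : rf = 𝟙 _ ≫ rf ≫ 𝟙 _)

lemma mcomp_mcomp_minv' (s u : Mor C) (hu : MInv u) (h : u.2.1 = s.1) :
    mcomp (mcomp s u h) (minv' u hu) rfl = s := by
  rw [mcomp_assoc s u (minv' u hu) h rfl]
  have hid : mcomp u (minv' u hu) rfl = idMor u.2.1 := by
    refine mor_ext rfl rfl ?_
    haveI : IsIso u.2.2 := hu
    change IsIso u.2.2 at hu
    dsimp only [mcomp, minv', idMor]
    simp
    rfl
  exact (mcomp_congr rfl hid h h).trans (mcomp_id_right s u.2.1 h)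

lemma minv_mcomp_of {x y : Mor C} (h : y.2.1 = x.1) (hx : MInv x) (hy : MInv y) :
    MInv (mcomp x y h) := by
  simp only [MInv, mcomp]
  haveI : IsIso x.2.2 := hx
  haveI : IsIso y.2.2 := hy
  infer_instance

lemma iso_of_comp_iso {A B D : C} (f : A ⟶ B) (g : B ⟶ D) [Mono g] [IsIso (f ≫ g)] :
    IsIso f ∧ IsIso g := by
  have hinv2 : g ≫ inv (f ≫ g) ≫ f = 𝟙 B := by
    rw [← cancel_mono g]
    calc (g ≫ inv (f ≫ g) ≫ f) ≫ g = g ≫ (inv (f ≫ g) ≫ (f ≫ g)) := by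
          simp only [Category.assoc]
      _ = g := by rw [IsIso.inv_hom_id, Category.comp_id]
      _ = 𝟙 B ≫ g := by rw [Category.id_comp]
  have hinv1 : (inv (f ≫ g) ≫ f) ≫ g = 𝟙 D := by
    rw [Category.assoc]; exact IsIso.inv_hom_id _
  haveI : IsIso g := ⟨inv (f ≫ g) ≫ f, hinv2, hinv1⟩
  haveI : IsIso f := by
    have : f = (f ≫ g) ≫ inv g := by simp
    rw [this]; infer_instance
  exact ⟨‹_›, ‹_›⟩

lemma minv_of_mcomp (hmono : ∀ {a b : C} (f : a ⟶ b), Mono f)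
    {x y : Mor C} (h : y.2.1 = x.1) (hxy : MInv (mcomp x y h)) : MInv x ∧ MInv y := by
  simp only [MInv, mcomp] at hxy
  haveI := hmono x.2.2
  haveI : IsIso ((y.2.2 ≫ eqToHom h) ≫ x.2.2) := by
    rw [Category.assoc]; exact hxy
  obtain ⟨hf, hg⟩ := iso_of_comp_iso (y.2.2 ≫ eqToHom h) x.2.2
  refine ⟨hg, ?_⟩
  have : y.2.2 = (y.2.2 ≫ eqToHom h) ≫ eqToHom h.symm := by simp
  show IsIso y.2.2
  rw [this]; infer_instance

lemma ldvd_of_minv {r m : Mor C} (hr : MInv r) (h : m.2.1 = r.2.1) : ldvd r m := by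
  rw [show m = mcomp r (mcomp (minv' r hr) m h) rfl from (mcomp_minv'_mcomp r hr m h).symm]
  exact ldvd_mcomp _ _ _

/-! ### ProdEq lemmas -/

lemma prodEq_nil_elim {m : Mor C} (h : ProdEq [] m) : ∃ v, m = (⟨v, v, 𝟙 v⟩ : Mor C) := by
  cases h with
  | nil v => exact ⟨v, rfl⟩

lemma prodEq_single_elim {s m : Mor C} (h : ProdEq [s] m) : m = s := by
  cases h with
  | single => rfl
  | cons s hb hc =>
    rename_i b
    obtain ⟨v, rfl⟩ := prodEq_nil_elim hb
    dsimp at hc; subst hc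
    exact mor_ext rfl rfl (by simp [mcomp]; exact (Category.id_comp _).symm)

lemma prodEq_cons_elim {g : Mor C} {w : List (Mor C)} {m : Mor C}
    (h : ProdEq (g :: w) m) :
    ∃ (b : Mor C) (hc : b.2.1 = g.1), ProdEq w b ∧ m = mcomp g b hc := by
  cases h with
  | single s => exact ⟨idMor g.1, rfl, ProdEq.nil g.1, (mcomp_id_right g g.1 rfl).symm⟩
  | cons s hb hc => exact ⟨_, hc, hb, rfl⟩

lemma prodEq_tgt {g : Mor C} {w : List (Mor C)} {m : Mor C} (h : ProdEq (g :: w) m) :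
    m.2.1 = g.2.1 := by
  obtain ⟨b, hc, _, rfl⟩ := prodEq_cons_elim h; rfl

lemma prodEq_unique {w : List (Mor C)} (hw : w ≠ []) {m m' : Mor C}
    (h : ProdEq w m) (h' : ProdEq w m') : m = m' := by
  induction w generalizing m m' with
  | nil => exact absurd rfl hw
  | cons g t ih =>
    rcases eq_or_ne t [] with rfl | hne
    · rw [prodEq_single_elim h, prodEq_single_elim h']
    · obtain ⟨b, hc, hb, rfl⟩ := prodEq_cons_elim h
      obtain ⟨b', hc', hb', rfl⟩ := prodEq_cons_elim h'
      exact mcomp_congr rfl (ih hne hb hb') hc hc'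

lemma head_ldvd_prod {g : Mor C} {w : List (Mor C)} {m : Mor C} (h : ProdEq (g :: w) m) :
    ldvd g m := by
  obtain ⟨b, hc, _, rfl⟩ := prodEq_cons_elim h
  exact ldvd_mcomp _ _ _

lemma minv_prod (hmono : ∀ {a b : C} (f : a ⟶ b), Mono f)
    {w : List (Mor C)} {m : Mor C} (h : ProdEq w m) (hm : MInv m) :
    ∀ x ∈ w, MInv x := by
  induction h with
  | nil v => simp
  | single s => simpa using hm
  | cons s hb hc ih =>
    obtain ⟨h1, h2⟩ := minv_of_mcomp hmono _ hm
    intro x hx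
    rcases List.mem_cons.1 hx with rfl | hx
    · exact h1
    · exact ih h2 x hx

lemma not_minv_prod (hmono : ∀ {a b : C} (f : a ⟶ b), Mono f)
    {w : List (Mor C)} {m x : Mor C} (h : ProdEq w m) (hx : x ∈ w) (hni : ¬ MInv x) :
    ¬ MInv m := fun hm => hni (minv_prod hmono h hm x hx)

/-! ### SSharp lemmas -/

lemma mem_sharp_of_mem {s : Mor C} (hs : s ∈ S) : s ∈ SSharp S :=
  Or.inr ⟨s, hs, idMor s.1, minv_idMor s.1, rfl, (mcomp_id_right s s.1 rfl).symm⟩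

lemma sharp_mul_unit {x v : Mor C} (hx : x ∈ SSharp S) (hv : MInv v) (h : v.2.1 = x.1) :
    mcomp x v h ∈ SSharp S := by
  rcases hx with hx | ⟨s, hs, u, hu, hc, rfl⟩
  · exact Or.inl (minv_mcomp_of h hx hv)
  · rw [mcomp_assoc s u v hc h]
    exact Or.inr ⟨s, hs, mcomp u v h, @minv_mcomp_of _ _ u v h hu hv, hc, rfl⟩

lemma sharp_elim_of_not_minv {x : Mor C} (hx : x ∈ SSharp S) (hni : ¬ MInv x) :
    ∃ s ∈ S, ∃ (u : Mor C) (hu : MInv u) (h : u.2.1 = s.1),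
      x = mcomp s u h ∧ ¬ MInv s := by
  rcases hx with hx | ⟨s, hs, u, hu, hc, rfl⟩
  · exact absurd hx hni
  · refine ⟨s, hs, u, hu, hc, rfl, fun hsi => hni (minv_mcomp_of hc hsi hu)⟩

lemma ldvd_of_unit_factor {x s u : Mor C} (hu : MInv u) (h : u.2.1 = s.1)
    (hx : x = mcomp s u h) : ldvd x s := by
  subst hx
  have := ldvd_mcomp (mcomp s u h) (minv' u hu) rfl
  rwa [mcomp_mcomp_minv'] at this

/-- If `s' ⪯ y` and `x = s'·ω` with `ω` invertible, then `x ⪯ y`. -/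
lemma ldvd_of_unit_twist {x s' ω y : Mor C} (hω : MInv ω) (h : ω.2.1 = s'.1)
    (hx : x = mcomp s' ω h) (hd : ldvd s' y) : ldvd x y :=
  ldvd_trans (ldvd_of_unit_factor hω h hx) hd

/-! ### NormalPair helpers -/

lemma normalPair_elim {a b : Mor C} (hn : NormalPair S a b) (hc : b.2.1 = a.1)
    {r : Mor C} (hr : r ∈ S) (hd : ldvd r (mcomp a b hc)) : ldvd r a :=
  hn (mcomp a b hc) (ProdEq.cons a (ProdEq.single b) hc) r hr hd

lemma normalPair_intro {a b : Mor C}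
    (h : ∀ (hc : b.2.1 = a.1) (r : Mor C), r ∈ S → ldvd r (mcomp a b hc) → ldvd r a) :
    NormalPair S a b := by
  intro m hm r hr hd
  obtain ⟨b', hc, hb', rfl⟩ := prodEq_cons_elim hm
  have hb'' := prodEq_single_elim hb'
  subst hb''
  exact h hc r hr hd

lemma mcomp_id_left' (x : Mor C) (v : C) (h : x.2.1 = v) :
    mcomp ⟨v, v, 𝟙 v⟩ x h = x := mcomp_id_left x v h

/-! ### The greedy lemma -/

lemma greedy_core (hmono : ∀ {a b : C} (f : a ⟶ b), Mono f) (hG : IsGarside S) :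
    ∀ (w : List (Mor C)), (∀ x ∈ w, x ∈ S ∨ MInv x) →
    ∀ {s₁ s₂ : Mor C}, NormalPair S s₁ s₂ → ∀ (h12 : s₂.2.1 = s₁.1),
    ∀ (f : Mor C), ProdEq w f → ∀ (h1f : s₁.2.1 = f.1),
    ∀ r ∈ S, ldvd r (mcomp f (mcomp s₁ s₂ h12) h1f) → ldvd r (mcomp f s₁ h1f) := by
  intro w
  induction w with
  | nil =>
    intro _ s₁ s₂ hn h12 f hf h1f r hr hd
    obtain ⟨v, rfl⟩ := prodEq_nil_elim hf
    rw [mcomp_id_left' (mcomp s₁ s₂ h12) v h1f] at hd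
    rw [mcomp_id_left' s₁ v h1f]
    exact normalPair_elim hn h12 hr hd
  | cons g w' ih =>
    intro hmem s₁ s₂ hn h12 f hf h1f r hr hd
    obtain ⟨f', hcf, hf', rfl⟩ := prodEq_cons_elim hf
    have h1f' : s₁.2.1 = f'.1 := h1f
    have hmem' : ∀ x ∈ w', x ∈ S ∨ MInv x := fun x hx => hmem x (List.mem_cons_of_mem _ hx)
    have hd2 : ldvd r (mcomp g (mcomp f' (mcomp s₁ s₂ h12) h1f') hcf) := by
      rw [← mcomp_assoc g f' (mcomp s₁ s₂ h12) hcf h1f']; exact hd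
    rw [show mcomp (mcomp g f' hcf) s₁ h1f = mcomp g (mcomp f' s₁ h1f') hcf from
      mcomp_assoc g f' s₁ hcf h1f']
    -- key: any x ∈ SSharp dividing f'·(s₁s₂) divides f'·s₁
    have key : ∀ x, x ∈ SSharp S → ldvd x (mcomp f' (mcomp s₁ s₂ h12) h1f') →
        ldvd x (mcomp f' s₁ h1f') := by
      intro x hxs hxd
      rcases hxs with hxi | ⟨s', hs', ω, hω, hcω, rfl⟩
      · have htx : (mcomp f' s₁ h1f').2.1 = x.2.1 :=
          ldvd_tgt (x := x) (m := mcomp f' (mcomp s₁ s₂ h12) h1f') hxd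
        exact ldvd_of_minv hxi htx
      · have hs'd : ldvd s' (mcomp f' (mcomp s₁ s₂ h12) h1f') :=
          ldvd_trans (ldvd_mcomp s' ω hcω) hxd
        exact ldvd_of_unit_twist hω hcω rfl (ih hmem' hn h12 f' hf' h1f' s' hs' hs'd)
    rcases hmem g (List.mem_cons_self) with hgS | hgu
    · -- g ∈ S
      have hgd : ldvd g (mcomp g (mcomp f' (mcomp s₁ s₂ h12) h1f') hcf) := ldvd_mcomp _ _ _
      obtain ⟨t, htS, hrt, hgt, htA⟩ := hG.1 r hr g hgS _ hd2 hgd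
      obtain ⟨x, hxc, rfl⟩ := ldvd_iff.1 hgt
      have hxB : ldvd x (mcomp f' (mcomp s₁ s₂ h12) h1f') :=
        ldvd_mcomp_cancel hmono g hxc hcf htA
      have hxsharp : x ∈ SSharp S := hG.2.2.1 g x hxc (mem_sharp_of_mem htS)
      exact ldvd_trans hrt (ldvd_mcomp_mono g (x := x) (y := mcomp f' s₁ h1f')
        hxc hcf (key x hxsharp hxB))
    · -- g invertible
      have hrt : r.2.1 = g.2.1 := (ldvd_tgt hd2).symm
      have hrr' : mcomp g (mcomp (minv' g hgu) r hrt) rfl = r := mcomp_minv'_mcomp g hgu r hrt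
      have hr'B : ldvd (mcomp (minv' g hgu) r hrt) (mcomp f' (mcomp s₁ s₂ h12) h1f') := by
        apply ldvd_mcomp_cancel hmono g (x := mcomp (minv' g hgu) r hrt)
          (y := mcomp f' (mcomp s₁ s₂ h12) h1f') rfl hcf
        rw [hrr']
        exact hd2
      have hr'sharp : mcomp (minv' g hgu) r hrt ∈ SSharp S :=
        hG.2.2.1 g _ rfl (by rw [hrr']; exact mem_sharp_of_mem hr)
      have := ldvd_mcomp_mono g (x := mcomp (minv' g hgu) r hrt)
        (y := mcomp f' s₁ h1f') rfl hcf (key _ hr'sharp hr'B)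
      rw [hrr'] at this
      exact this

lemma greedy_pair (hmono : ∀ {a b : C} (f : a ⟶ b), Mono f) (hG : IsGarside S)
    {s₁ s₂ : Mor C} (hn : NormalPair S s₁ s₂) (h12 : s₂.2.1 = s₁.1)
    (f : Mor C) (h1f : s₁.2.1 = f.1) {r : Mor C} (hr : r ∈ S)
    (hd : ldvd r (mcomp f (mcomp s₁ s₂ h12) h1f)) : ldvd r (mcomp f s₁ h1f) := by
  obtain ⟨w, hwmem, hwp⟩ := hG.2.1 f
  exact greedy_core hmono hG w hwmem hn h12 f hwp h1f r hr hd

lemma chain_greedy (hmono : ∀ {a b : C} (f : a ⟶ b), Mono f) (hG : IsGarside S) :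
    ∀ (w : List (Mor C)) (hd : Mor C), IsNormalWord S (hd :: w) →
    ∀ {m : Mor C}, ProdEq (hd :: w) m → ∀ (f : Mor C) (hmf : m.2.1 = f.1)
    (hhf : hd.2.1 = f.1), ∀ r ∈ S, ldvd r (mcomp f m hmf) → ldvd r (mcomp f hd hhf) := by
  intro w
  induction w with
  | nil =>
    intro hd _ m hm f hmf hhf r hr h
    have := prodEq_single_elim hm
    subst this
    exact h
  | cons h₂ t ih =>
    intro hd hnw m hm f hmf hhf r hr hdv
    obtain ⟨b, hcb, hb, rfl⟩ := prodEq_cons_elim hm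
    obtain ⟨⟨hc1, hnp⟩, hch'⟩ := List.isChain_cons_cons.1 hnw
    have hb2 : b.2.1 = h₂.2.1 := prodEq_tgt hb
    have h2hd : h₂.2.1 = hd.1 := hc1.symm
    have hdv' : ldvd r (mcomp (mcomp f hd hhf) b hcb) := by
      rw [mcomp_assoc f hd b hhf hcb]; exact hdv
    have hstep : ldvd r (mcomp (mcomp f hd hhf) h₂ h2hd) :=
      ih h₂ hch' hb (mcomp f hd hhf) (hb2.trans h2hd) h2hd r hr hdv'
    rw [mcomp_assoc f hd h₂ hhf h2hd] at hstep
    exact greedy_pair hmono hG hnp h2hd f hhf hr hstep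

lemma chain_greedy_id (hmono : ∀ {a b : C} (f : a ⟶ b), Mono f) (hG : IsGarside S)
    {w : List (Mor C)} {hd : Mor C} (hnw : IsNormalWord S (hd :: w))
    {m : Mor C} (hm : ProdEq (hd :: w) m) {r : Mor C} (hr : r ∈ S)
    (hdv : ldvd r m) : ldvd r hd := by
  have htgt : m.2.1 = hd.2.1 := prodEq_tgt hm
  have h1 : ldvd r (mcomp (idMor m.2.1) m rfl) := by
    rw [mcomp_id_left]; exact hdv
  have := chain_greedy hmono hG w hd hnw hm (idMor m.2.1) rfl htgt.symm r hr h1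
  rwa [mcomp_id_left] at this

/-! ### strict ("good") normal words -/

def Good (S : Set (Mor C)) (w : List (Mor C)) : Prop :=
  IsNormalWord S w ∧ (∀ x ∈ w, x ∈ SSharp S) ∧ w ≠ [] ∧
  (∀ (i : ℕ) (h : i + 1 < w.length),
    w[i]'(Nat.lt_of_succ_lt h) ∈ S ∧ ¬ MInv (w[i]'(Nat.lt_of_succ_lt h))) ∧
  (∀ h : w ≠ [], w.getLast h ∈ SSharp S ∧ ¬ MInv (w.getLast h))

lemma good_single {x : Mor C} (hx : x ∈ SSharp S) (hni : ¬ MInv x) : Good S [x] := by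
  refine ⟨List.isChain_singleton x, by simpa using hx, by simp, ?_, ?_⟩
  · intro i h; simp at h
  · intro h; simpa using ⟨hx, hni⟩

lemma good_tail {t : Mor C} {ts : List (Mor C)} (h : Good S (t :: ts)) (hne : ts ≠ []) :
    Good S ts := by
  obtain ⟨h1, h2, _, h4, h5⟩ := h
  refine ⟨h1.tail, fun x hx => h2 x (List.mem_cons_of_mem _ hx), hne, ?_, ?_⟩
  · intro i hi
    have := h4 (i + 1) (by simpa using Nat.succ_lt_succ hi)
    simpa using this
  · intro hne'
    have := h5 (by simp)
    rwa [List.getLast_cons hne'] at this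

lemma good_head_mem {t : Mor C} {ts : List (Mor C)} (h : Good S (t :: ts)) (hne : ts ≠ []) :
    t ∈ S ∧ ¬ MInv t := by
  have hlen : 0 + 1 < (t :: ts).length := by
    simp only [List.length_cons]
    have : ts.length ≠ 0 := fun h0 => hne (List.eq_nil_of_length_eq_zero h0)
    omega
  simpa using h.2.2.2.1 0 hlen

lemma good_prod_noninv (hmono : ∀ {a b : C} (f : a ⟶ b), Mono f)
    {w : List (Mor C)} {m : Mor C} (h : Good S w) (hp : ProdEq w m) : ¬ MInv m := by
  have hne := h.2.2.1
  have hlast := h.2.2.2.2 hne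
  exact not_minv_prod hmono hp (List.getLast_mem hne) hlast.2

lemma good_cons {s b : Mor C} {ts : List (Mor C)} (h : Good S (b :: ts)) (hs : s ∈ S)
    (hsni : ¬ MInv s) (hcmp : s.1 = b.2.1) (hnp : NormalPair S s b) :
    Good S (s :: b :: ts) := by
  obtain ⟨h1, h2, _, h4, h5⟩ := h
  refine ⟨List.isChain_cons_cons.2 ⟨⟨hcmp, hnp⟩, h1⟩, ?_, by simp, ?_, ?_⟩
  · intro x hx
    rcases List.mem_cons.1 hx with rfl | hx
    · exact mem_sharp_of_mem hs
    · exact h2 x hx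
  · intro i hi
    match i with
    | 0 => simpa using ⟨hs, hsni⟩
    | (j + 1) =>
      have := h4 j (by simpa using Nat.lt_of_succ_lt_succ hi)
      simpa using this
  · intro _
    rw [List.getLast_cons (by simp : (b :: ts) ≠ [])]
    exact h5 (by simp)

/-! ### uniqueness -/

lemma aux_absurd (hmono : ∀ {a b : C} (f : a ⟶ b), Mono f) (hG : IsGarside S)
    {t : Mor C} {ts : List (Mor C)} {a : Mor C}
    (hg : Good S (t :: ts)) (hp : ProdEq (t :: ts) a) (hne : ts ≠ [])
    (hsh : a ∈ SSharp S) : False := by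
  obtain ⟨b, hcb, hb, rfl⟩ := prodEq_cons_elim hp
  have hgts : Good S ts := good_tail hg hne
  have hbni : ¬ MInv b := good_prod_noninv hmono hgts hb
  have hani : ¬ MInv (mcomp t b hcb) := fun hi => hbni (minv_of_mcomp hmono hcb hi).2
  obtain ⟨s₀, hs₀S, u, hu, hcu, hae, _⟩ := sharp_elim_of_not_minv hsh hani
  have h1 : ldvd s₀ (mcomp t b hcb) := by rw [hae]; exact ldvd_mcomp s₀ u hcu
  have h2 : ldvd s₀ t := chain_greedy_id hmono hG hg.1 hp hs₀S h1
  obtain ⟨e, hce, rfl⟩ := ldvd_iff.1 h2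
  have hassoc : mcomp (mcomp s₀ e hce) b hcb = mcomp s₀ (mcomp e b hcb) hce :=
    mcomp_assoc s₀ e b hce hcb
  have heq : mcomp s₀ (mcomp e b hcb) hce = mcomp s₀ u hcu := hassoc.symm.trans hae
  have hc := mcomp_cancel hmono heq
  have : MInv (mcomp e b hcb) := by rw [hc]; exact hu
  exact hbni (minv_of_mcomp hmono (x := e) (y := b) hcb this).2

lemma good_unique (hmono : ∀ {a b : C} (f : a ⟶ b), Mono f) (hG : IsGarside S)
    (htr : Transverse S) :
    ∀ (w : List (Mor C)), Good S w → ∀ (w' : List (Mor C)) (a : Mor C), Good S w' →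
      ProdEq w a → ProdEq w' a → w = w' := by
  intro w
  induction w with
  | nil => intro hg; exact absurd rfl hg.2.2.1
  | cons s ws ih =>
    intro hg w' a hg' hp hp'
    obtain ⟨t, ts, rfl⟩ : ∃ t ts, w' = t :: ts := by
      cases w' with
      | nil => exact absurd rfl hg'.2.2.1
      | cons x xs => exact ⟨x, xs, rfl⟩
    rcases eq_or_ne ws [] with rfl | hwne
    · rcases eq_or_ne ts [] with rfl | htne
      · rw [show s = t from (prodEq_single_elim hp).symm.trans (prodEq_single_elim hp')]
      · exact absurd (aux_absurd hmono hG hg' hp' htne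
          ((prodEq_single_elim hp) ▸ hg.2.1 s (by simp))) (by simp)
    · rcases eq_or_ne ts [] with rfl | htne
      · exact absurd (aux_absurd hmono hG hg hp hwne
          ((prodEq_single_elim hp') ▸ hg'.2.1 t (by simp))) (by simp)
      · have hsS := good_head_mem hg hwne
        have htS := good_head_mem hg' htne
        have hts : ldvd t s :=
          chain_greedy_id hmono hG hg.1 hp htS.1 (head_ldvd_prod hp')
        have hst : ldvd s t :=
          chain_greedy_id hmono hG hg'.1 hp' hsS.1 (head_ldvd_prod hp)
        have hstt : s = t := htr s hsS.1 t htS.1 (princ_eq_of_dvd_dvd hst hts)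
        subst hstt
        obtain ⟨b, hcb, hb, he⟩ := prodEq_cons_elim hp
        obtain ⟨b', hcb', hb', he'⟩ := prodEq_cons_elim hp'
        have hbb : b = b' := mcomp_cancel hmono (he.symm.trans he')
        subst hbb
        rw [ih (good_tail hg hwne) ts b (good_tail hg' htne) hb hb']

/-! ### existence -/

lemma good_head_noninv {t : Mor C} {ts : List (Mor C)} (h : Good S (t :: ts)) :
    ¬ MInv t := by
  rcases eq_or_ne ts [] with rfl | hne
  · have := h.2.2.2.2 (by simp)
    simpa using this.2
  · exact (good_head_mem h hne).2

lemma unit_mul_S_mem_sharp (hmono : ∀ {a b : C} (f : a ⟶ b), Mono f) (hG : IsGarside S)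
    {u s : Mor C} (hu : MInv u) (hs : s ∈ S) (h : s.2.1 = u.1) :
    mcomp u s h ∈ SSharp S := by
  by_cases hsi : MInv s
  · exact Or.inl (minv_mcomp_of h hu hsi)
  have hmni : ¬ MInv (mcomp u s h) := fun hi => hsi (minv_of_mcomp hmono h hi).2
  obtain ⟨w, hwS, hwn, hwp⟩ := hG.2.2.2 (mcomp u s h)
  obtain ⟨y, ys, rfl⟩ : ∃ y ys, w = y :: ys := by
    cases w with
    | nil =>
      obtain ⟨v, hv⟩ := prodEq_nil_elim hwp
      exact absurd (by rw [hv]; exact minv_idMor v) hmni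
    | cons y ys => exact ⟨y, ys, rfl⟩
  rcases eq_or_ne ys [] with rfl | hyne
  · rw [show mcomp u s h = y from prodEq_single_elim hwp]
    exact hwS y (by simp)
  · obtain ⟨c, hcc, hc, he⟩ := prodEq_cons_elim hwp
    have hyc : y.2.1 = u.2.1 := (prodEq_tgt hwp).symm
    have hsd : ldvd s (mcomp (minv' u hu) (mcomp u s h) rfl) := by
      rw [minv'_mcomp_mcomp u hu s h]; exact ldvd_refl s
    have hstep : ldvd s (mcomp (minv' u hu) y hyc) :=
      chain_greedy hmono hG ys y hwn hwp (minv' u hu) rfl hyc s hs hsd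
    obtain ⟨d, hcd, hyd⟩ := ldvd_iff.1 hstep
    -- y = u·(s·d)
    have hy : mcomp u (mcomp (minv' u hu) y hyc) rfl = y := mcomp_minv'_mcomp u hu y hyc
    have hy2 : y = mcomp u (mcomp s d hcd) h :=
      (hy.symm.trans (mcomp_congr rfl hyd rfl h))
    have hy1 : y.1 = d.1 := by have := fst_eq_mcomp hyd; exact this
    have hdc : c.2.1 = d.1 := hcc.trans hy1
    -- A = A·(d·c)
    have hQ : mcomp (mcomp u s h) (mcomp d c hdc) hcd = mcomp u s h := by
      calc mcomp (mcomp u s h) (mcomp d c hdc) hcd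
          = mcomp u (mcomp s (mcomp d c hdc) hcd) h := mcomp_assoc u s (mcomp d c hdc) h hcd
        _ = mcomp u (mcomp (mcomp s d hcd) c hdc) h :=
            mcomp_congr rfl (mcomp_assoc s d c hcd hdc).symm h h
        _ = mcomp (mcomp u (mcomp s d hcd) h) c hdc :=
            (mcomp_assoc u (mcomp s d hcd) c h hdc).symm
        _ = mcomp y c hcc := mcomp_congr hy2.symm rfl hdc hcc
        _ = mcomp u s h := he.symm
    have hid : mcomp d c hdc = idMor (mcomp u s h).1 :=
      mcomp_cancel hmono (hQ.trans (mcomp_id_right (mcomp u s h) _ rfl).symm)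
    have hcinv : MInv c :=
      (minv_of_mcomp hmono (x := d) (y := c) hdc (by rw [hid]; exact minv_idMor _)).2
    rw [he]
    exact sharp_mul_unit (hwS y (by simp)) hcinv hcc

lemma unit_mul_mem_sharp (hmono : ∀ {a b : C} (f : a ⟶ b), Mono f) (hG : IsGarside S)
    {u t : Mor C} (hu : MInv u) (ht : t ∈ SSharp S) (h : t.2.1 = u.1) :
    mcomp u t h ∈ SSharp S := by
  rcases ht with hti | ⟨s, hsS, v, hv, hcv, rfl⟩
  · exact Or.inl (minv_mcomp_of h hu hti)
  · have h' : s.2.1 = u.1 := h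
    rw [show mcomp u (mcomp s v hcv) h = mcomp (mcomp u s h') v hcv from
      (mcomp_assoc u s v h' hcv).symm]
    exact sharp_mul_unit (unit_mul_S_mem_sharp hmono hG hu hsS h') hv hcv

lemma absorb (hmono : ∀ {a b : C} (f : a ⟶ b), Mono f) (hG : IsGarside S) :
    ∀ (w : List (Mor C)) {b : Mor C}, Good S w → ProdEq w b →
    ∀ {u : Mor C}, MInv u → ∀ (h : b.2.1 = u.1),
    ∃ w', Good S w' ∧ ProdEq w' (mcomp u b h) := by
  intro w
  induction w with
  | nil => intro b hg; exact absurd rfl hg.2.2.1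
  | cons t ts ih =>
    intro b hg hp u hu h
    have htu : t.2.1 = u.1 := (prodEq_tgt hp).symm.trans h
    have htni : ¬ MInv t := good_head_noninv hg
    have hut_sharp : mcomp u t htu ∈ SSharp S :=
      unit_mul_mem_sharp hmono hG hu (hg.2.1 t (by simp)) htu
    have hutni : ¬ MInv (mcomp u t htu) :=
      fun hi => htni (minv_of_mcomp hmono htu hi).2
    rcases eq_or_ne ts [] with rfl | htne
    · have hbt : b = t := prodEq_single_elim hp
      subst hbt
      exact ⟨[mcomp u b h], good_single hut_sharp hutni, ProdEq.single _⟩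
    · obtain ⟨c, hcc, hc, hbe⟩ := prodEq_cons_elim hp
      obtain ⟨s, hsS, v, hv, hcv, hute, hsni⟩ := sharp_elim_of_not_minv hut_sharp hutni
      have hv1 : v.1 = t.1 := by have := fst_eq_mcomp hute; exact this.symm
      have hgc : Good S ts := good_tail hg htne
      have hccv : c.2.1 = v.1 := hcc.trans hv1.symm
      obtain ⟨w'', hgw'', hpw''⟩ := ih hgc hc hv hccv
      obtain ⟨h2, hs2, rfl⟩ : ∃ h2 hs2, w'' = h2 :: hs2 := by
        cases w'' with
        | nil => exact absurd rfl hgw''.2.2.1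
        | cons y ys => exact ⟨y, ys, rfl⟩
      have hkey : mcomp u b h = mcomp s (mcomp v c hccv) hcv := by
        calc mcomp u b h = mcomp u (mcomp t c hcc) htu := mcomp_congr rfl hbe h htu
          _ = mcomp (mcomp u t htu) c hcc := (mcomp_assoc u t c htu hcc).symm
          _ = mcomp (mcomp s v hcv) c hccv := mcomp_congr hute rfl hcc hccv
          _ = mcomp s (mcomp v c hccv) hcv := mcomp_assoc s v c hcv hccv
      refine ⟨s :: h2 :: hs2, ?_, by rw [hkey]; exact ProdEq.cons s hpw'' hcv⟩
      have htg2 : s.1 = h2.2.1 := by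
        have := prodEq_tgt hpw''; exact hcv.symm.trans this
      apply good_cons hgw'' hsS hsni htg2
      refine normalPair_intro ?_
      intro hc2 r hr hrd
      have h2d : ldvd h2 (mcomp v c hccv) := head_ldvd_prod hpw''
      have hra : ldvd r (mcomp u b h) := by
        rw [hkey]
        exact ldvd_trans hrd (ldvd_mcomp_mono s (x := h2) (y := mcomp v c hccv) hc2 hcv h2d)
      have hrt : r.2.1 = u.2.1 := (ldvd_tgt hra).symm
      have hrr : mcomp u (mcomp (minv' u hu) r hrt) rfl = r := mcomp_minv'_mcomp u hu r hrt
      have hr'b : ldvd (mcomp (minv' u hu) r hrt) b := by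
        apply ldvd_mcomp_cancel hmono u (x := mcomp (minv' u hu) r hrt) (y := b) rfl h
        rw [hrr]; exact hra
      have hr'sharp : mcomp (minv' u hu) r hrt ∈ SSharp S :=
        hG.2.2.1 u _ rfl (by rw [hrr]; exact mem_sharp_of_mem hr)
      by_cases hr'i : MInv (mcomp (minv' u hu) r hrt)
      · have hri : MInv r := by rw [← hrr]; exact minv_mcomp_of rfl hu hr'i
        have htx : (mcomp s h2 hc2).2.1 = r.2.1 := ldvd_tgt hrd
        exact ldvd_of_minv hri htx
      · obtain ⟨s'', hs''S, ω, hω, hcω, hr'e, _⟩ := sharp_elim_of_not_minv hr'sharp hr'i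
        have hs''r' : ldvd s'' (mcomp (minv' u hu) r hrt) := by
          rw [hr'e]; exact ldvd_mcomp _ _ _
        have hs''b : ldvd s'' b := ldvd_trans hs''r' hr'b
        have hs''t : ldvd s'' t := chain_greedy_id hmono hG hg.1 hp hs''S hs''b
        obtain ⟨d, hcd, htd⟩ := ldvd_iff.1 hs''t
        -- now show r ⪯ s
        have hus : s''.2.1 = u.1 := by
          have := tgt_eq_mcomp htd; exact this.symm.trans htu
        have e2 : mcomp u t htu = mcomp (mcomp u s'' hus) d hcd :=
          (mcomp_congr rfl htd htu hus).trans (mcomp_assoc u s'' d hus hcd).symm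
        have e3 : r = mcomp (mcomp u s'' hus) ω hcω :=
          (hrr.symm.trans (mcomp_congr rfl hr'e rfl hus)).trans
            (mcomp_assoc u s'' ω hus hcω).symm
        have hrω : ω.1 = r.1 := by have := fst_eq_mcomp e3; exact this.symm
        have e4 : mcomp r (minv' ω hω) hrω = mcomp u s'' hus :=
          (mcomp_congr e3 rfl hrω rfl).trans
            (mcomp_mcomp_minv' (mcomp u s'' hus) ω hω hcω)
        have hdt1 : d.1 = t.1 := by have := fst_eq_mcomp htd; exact this.symm
        have hvd : (minv' v hv).2.1 = d.1 := hv1.trans hdt1.symm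
        have e1 : s = mcomp (mcomp u t htu) (minv' v hv) hv1 :=
          ((mcomp_congr hute rfl hv1 rfl).trans (mcomp_mcomp_minv' s v hv hcv)).symm
        have hdω : d.2.1 = ω.2.1 := hcd.trans hcω.symm
        have e5 : s = mcomp r (mcomp (minv' ω hω)
            (mcomp d (minv' v hv) hvd) hdω) hrω := by
          calc s = mcomp (mcomp u t htu) (minv' v hv) hv1 := e1
            _ = mcomp (mcomp (mcomp u s'' hus) d hcd) (minv' v hv) hvd :=
                mcomp_congr e2 rfl hv1 hvd
            _ = mcomp (mcomp u s'' hus) (mcomp d (minv' v hv) hvd) hcd :=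
                mcomp_assoc (mcomp u s'' hus) d (minv' v hv) hcd hvd
            _ = mcomp (mcomp r (minv' ω hω) hrω) (mcomp d (minv' v hv) hvd) hdω :=
                mcomp_congr (y := mcomp d (minv' v hv) hvd) e4.symm rfl hcd hdω
            _ = mcomp r (mcomp (minv' ω hω) (mcomp d (minv' v hv) hvd) hdω) hrω :=
                mcomp_assoc r (minv' ω hω) (mcomp d (minv' v hv) hvd) hrω hdω
        exact ldvd_iff.2 ⟨_, hrω, e5⟩

lemma exists_good (hmono : ∀ {a b : C} (f : a ⟶ b), Mono f) (hG : IsGarside S) :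
    ∀ (w : List (Mor C)) {a : Mor C}, (∀ x ∈ w, x ∈ SSharp S) → IsNormalWord S w →
      ProdEq w a → ¬ MInv a → ∃ w', Good S w' ∧ ProdEq w' a := by
  intro w
  induction w with
  | nil =>
    intro a _ _ hp ha
    obtain ⟨v, rfl⟩ := prodEq_nil_elim hp
    exact absurd (minv_idMor v) ha
  | cons x rest ih =>
    intro a hmem hnw hp ha
    rcases eq_or_ne rest [] with rfl | hne
    · have hax := prodEq_single_elim hp
      subst hax
      exact ⟨[a], good_single (hmem a (by simp)) ha, ProdEq.single a⟩
    · obtain ⟨b, hcb, hb, rfl⟩ := prodEq_cons_elim hp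
      by_cases hbi : MInv b
      · exact ⟨[mcomp x b hcb], good_single
          (sharp_mul_unit (hmem x (by simp)) hbi hcb) ha, ProdEq.single _⟩
      · have hrest_mem : ∀ y ∈ rest, y ∈ SSharp S :=
          fun y hy => hmem y (List.mem_cons_of_mem _ hy)
        obtain ⟨w', hgw', hpw'⟩ := ih hrest_mem hnw.tail hb hbi
        by_cases hxi : MInv x
        · exact absorb hmono hG w' hgw' hpw' hxi hcb
        · obtain ⟨s, hsS, u, hu, hcu, hxe, hsni⟩ :=
            sharp_elim_of_not_minv (hmem x (by simp)) hxi
          have hbu : b.2.1 = u.1 := by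
            have := fst_eq_mcomp hxe; exact hcb.trans this
          obtain ⟨w'', hgw'', hpw''⟩ := absorb hmono hG w' hgw' hpw' hu hbu
          obtain ⟨h2, hs2, rfl⟩ : ∃ h2 hs2, w'' = h2 :: hs2 := by
            cases w'' with
            | nil => exact absurd rfl hgw''.2.2.1
            | cons y ys => exact ⟨y, ys, rfl⟩
          have hkey : mcomp x b hcb = mcomp s (mcomp u b hbu) hcu :=
            (mcomp_congr hxe rfl hcb hbu).trans (mcomp_assoc s u b hcu hbu)
          refine ⟨s :: h2 :: hs2, ?_, by rw [hkey]; exact ProdEq.cons s hpw'' hcu⟩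
          have htg2 : s.1 = h2.2.1 := by
            have := prodEq_tgt hpw''; exact hcu.symm.trans this
          apply good_cons hgw'' hsS hsni htg2
          refine normalPair_intro ?_
          intro hc2 r hr hrd
          have h2d : ldvd h2 (mcomp u b hbu) := head_ldvd_prod hpw''
          have hra : ldvd r (mcomp x b hcb) := by
            rw [hkey]
            exact ldvd_trans hrd (ldvd_mcomp_mono s (x := h2) (y := mcomp u b hbu) hc2 hcu h2d)
          have hrx : ldvd r x := chain_greedy_id hmono hG hnw hp hr hra
          exact ldvd_trans hrx (ldvd_of_unit_factor hu hcu hxe)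

end GarsideAux

/-- Let `𝔠` be a left cancellative small category with a Garside family `𝔖` which is
`=*`-transverse.  Then every `a ∈ 𝔠 ∖ 𝔠*` admits a unique normal decomposition
`a = s₁ ⋯ s_l` with `s_k ∈ 𝔖 ∖ 𝔠*` for `1 ≤ k ≤ l−1` and `s_l ∈ 𝔖♯ ∖ 𝔠*`. -/
theorem unique_normal_decomposition (hmono : ∀ {a b : C} (f : a ⟶ b), Mono f)
    (S : Set (Mor C)) (hG : IsGarside S) (htr : Transverse S)
    (a : Mor C) (ha : ¬ MInv a) :
    ∃! w : List (Mor C),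
      ProdEq w a ∧ IsNormalWord S w ∧ (∀ x ∈ w, x ∈ SSharp S) ∧ w ≠ [] ∧
      (∀ (i : ℕ) (h : i + 1 < w.length),
        w[i]'(Nat.lt_of_succ_lt h) ∈ S ∧ ¬ MInv (w[i]'(Nat.lt_of_succ_lt h))) ∧
      (∀ h : w ≠ [], w.getLast h ∈ SSharp S ∧ ¬ MInv (w.getLast h)) := by
  obtain ⟨w0, hw0mem, hw0n, hw0p⟩ := hG.2.2.2 a
  obtain ⟨w, hgw, hpw⟩ := GarsideAux.exists_good hmono hG w0 hw0mem hw0n hw0p ha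
  refine ⟨w, ⟨hpw, hgw.1, hgw.2.1, hgw.2.2.1, hgw.2.2.2.1, hgw.2.2.2.2⟩, ?_⟩
  rintro w' ⟨hp', h1, h2, h3, h4, h5⟩
  exact GarsideAux.good_unique hmono hG htr w' ⟨h1, h2, h3, h4, h5⟩ w a hgw hp' hpw
end

section
/- Let 𝔠 be a finitely aligned left cancellative small category generated by a subset 𝔖. Every character χ ∈ Ω that is not of the form χ_x for x ∈ 𝔠 equals χ_w for some infinite path w = s₁s₂⋯ in 𝔖, where χ_w(e) = 1 iff s₁⋯sₙ ∈ e for some n. -/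
open CategoryTheory

variable {C : Type*} [Category C]

/-- A character on the semilattice `𝒥` of constructible right ideals: a nonzero
multiplicative `{0,1}`-valued map sending `∅ = 0` to `0`. -/
def IsCharacter (χ : Set (Mor C) → Prop) : Prop :=
  (∃ e : Set (Mor C), IsConstructible e ∧ χ e) ∧ ¬ χ (∅ : Set (Mor C)) ∧
    ∀ e f : Set (Mor C), IsConstructible e → IsConstructible f →
      (χ (e ∩ f) ↔ χ e ∧ χ f)

/-- A maximal character: the filter `χ⁻¹(1)` is maximal among filters of characters. -/
def IsMaxCharacter (χ : Set (Mor C) → Prop) : Prop :=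
  IsCharacter χ ∧ ∀ ψ : Set (Mor C) → Prop, IsCharacter ψ →
    (∀ e : Set (Mor C), IsConstructible e → χ e → ψ e) →
    ∀ e : Set (Mor C), IsConstructible e → ψ e → χ e

/-- The character `χ_w` associated to an infinite word `w` in `𝔖`:
`χ_w(e) = 1` iff some finite prefix product `w₁ ⋯ wₙ` lies in `e`. -/
def chiW (w : ℕ → Mor C) : Set (Mor C) → Prop :=
  fun e => ∃ (n : ℕ) (m : Mor C), ProdEq ((List.range (n + 1)).map w) m ∧ m ∈ e

/-- `χ ∈ Ω`: a character such that whenever `e = ⋃ᵢ fᵢ` (finitely many `fᵢ ∈ 𝒥`) and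
`χ(e) = 1`, then `χ(fᵢ) = 1` for some `i`. -/
def InOmega (χ : Set (Mor C) → Prop) : Prop :=
  IsCharacter χ ∧ ∀ (k : ℕ) (e : Set (Mor C)) (f : Fin k → Set (Mor C)),
    IsConstructible e → (∀ i, IsConstructible (f i)) → e = ⋃ i, f i → χ e → ∃ i, χ (f i)


/-!
Left cancellation gives `c⁻¹(c d 𝔠) = d 𝔠`, and finite alignment writes `c⁻¹(x 𝔠)` as
`c⁻¹(x 𝔠 ∩ c 𝔠)`, a finite union of such sets; hence every constructible set is a finite union
of principal right ideals. A character `χ ∈ Ω` is therefore determined by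
`D = {x | χ(x 𝔠) = 1}`, which is directed under left divisibility `⪯`. If `χ` is not of the
form `χ_x`, then `D` has no largest element, and countability of `𝔠` yields a strictly
increasing chain `x₀ ≺ x₁ ≺ ⋯` in `D` eventually above every element of `D`. Writing `x₀` and
each quotient `x_n⁻¹ x_{n+1}` (a nonempty word, by strictness) as words in `𝔖` and concatenating
them gives the infinite path `w`; its prefix products and the chain dominate each other, so
`χ = χ_w`.
-/

def LeftCancellative (C : Type*) [Category C] : Prop := ∀ {a b : C} (f : a ⟶ b), Mono f

def FinitelyAligned (C : Type*) [Category C] : Prop :=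
  ∀ a b : Mor C, ∃ F : Finset (Mor C), princ a ∩ princ b = ⋃ c ∈ F, princ c

theorem ldvd_refl (x : Mor C) : ldvd x x :=
  ⟨x.1, 𝟙 x.1, by simp⟩

theorem ldvd_trans {x y z : Mor C} (hxy : ldvd x y) (hyz : ldvd y z) : ldvd x z := by
  obtain ⟨c, g, rfl⟩ := hxy
  obtain ⟨d, h, rfl⟩ := hyz
  exact ⟨d, h ≫ g, by simp⟩

instance : IsTrans (Mor C) ldvd := ⟨fun _ _ _ => ldvd_trans⟩

theorem princ_subset_princ {x y : Mor C} (h : ldvd x y) : princ y ⊆ princ x :=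
  fun _ => ldvd_trans h

theorem mcomp_assoc (a b c : Mor C) (hab : b.2.1 = a.1) (hbc : c.2.1 = b.1) :
    mcomp (mcomp a b hab) c hbc = mcomp a (mcomp b c hbc) hab := by
  simp [mcomp]

theorem mcomp_id {v : C} (a : Mor C) (h : v = a.1) : mcomp a ⟨v, v, 𝟙 v⟩ h = a := by
  subst h
  simp [mcomp]

theorem id_mcomp {v : C} (b : Mor C) (h : b.2.1 = v) : mcomp ⟨v, v, 𝟙 v⟩ b h = b := by
  subst h
  simp [mcomp]

theorem ldvd_mcomp (a b : Mor C) (h : b.2.1 = a.1) : ldvd a (mcomp a b h) :=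
  ⟨b.1, b.2.2 ≫ eqToHom h, by simp [mcomp]⟩

theorem ldvd.exists_eq_mcomp {a m : Mor C} (h : ldvd a m) : ∃ b hb, m = mcomp a b hb := by
  obtain ⟨c, g, rfl⟩ := h
  exact ⟨⟨c, a.1, g⟩, rfl, by simp [mcomp]⟩

theorem ldvd_id (b : Mor C) : ldvd ⟨b.2.1, b.2.1, 𝟙 b.2.1⟩ b :=
  ⟨b.1, b.2.2, by simp⟩

theorem mcomp_ldvd_mcomp {c x y : Mor C} (hx : x.2.1 = c.1) (hy : y.2.1 = c.1) (h : ldvd x y) :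
    ldvd (mcomp c x hx) (mcomp c y hy) := by
  obtain ⟨b, hb, rfl⟩ := h.exists_eq_mcomp
  rw [← mcomp_assoc c x b hx hb]
  exact ldvd_mcomp _ _ _

theorem mcomp_left_cancel (hC : LeftCancellative C) {c x y : Mor C} (hx : x.2.1 = c.1)
    (hy : y.2.1 = c.1) (h : mcomp c x hx = mcomp c y hy) : x = y := by
  obtain ⟨a, b, f⟩ := x
  obtain ⟨a', b', f'⟩ := y
  dsimp only at hx hy
  subst hx hy
  simp only [mcomp, eqToHom_refl, Category.id_comp, Sigma.mk.injEq] at h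
  obtain ⟨rfl, h⟩ := h
  simp only [Sigma.mk.injEq, heq_eq_eq, true_and] at h
  have := hC c.2.2
  rw [cancel_mono] at h
  rw [h]

theorem mcomp_ldvd_mcomp_iff (hC : LeftCancellative C) {c x y : Mor C} (hx : x.2.1 = c.1)
    (hy : y.2.1 = c.1) : ldvd (mcomp c x hx) (mcomp c y hy) ↔ ldvd x y := by
  refine ⟨fun h => ?_, mcomp_ldvd_mcomp hx hy⟩
  obtain ⟨b, hb, hyb⟩ := h.exists_eq_mcomp
  rw [mcomp_assoc c x b hx hb] at hyb
  rw [mcomp_left_cancel hC hy _ hyb]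
  exact ldvd_mcomp _ _ _

theorem ProdEq.append {l l' : List (Mor C)} {a b : Mor C} (ha : ProdEq l a) (hb : ProdEq l' b)
    (h : b.2.1 = a.1) : ProdEq (l ++ l') (mcomp a b h) := by
  induction ha with
  | nil v => rw [List.nil_append, id_mcomp b h]; exact hb
  | single s => exact .cons s hb h
  | cons s hl hc ih => rw [mcomp_assoc s _ b hc h]; exact .cons s (ih h) hc

theorem ProdEq.eq_mcomp_of_cons {s m : Mor C} {l : List (Mor C)} (h : ProdEq (s :: l) m) :
    ∃ b hb, ProdEq l b ∧ m = mcomp s b hb := by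
  cases h with
  | single => exact ⟨_, rfl, .nil s.1, (mcomp_id s rfl).symm⟩
  | cons _ hb hc => exact ⟨_, hc, hb, rfl⟩

theorem ProdEq.mcomp_eq_self_of_nil {a b : Mor C} (hb : ProdEq [] b) (h : b.2.1 = a.1) :
    mcomp a b h = a := by
  cases hb
  exact mcomp_id a h

theorem ProdEq.ldvd_of_append {l l' : List (Mor C)} (hl : l ≠ []) {a m : Mor C}
    (ha : ProdEq l a) (hm : ProdEq (l ++ l') m) : ldvd a m := by
  induction l generalizing a m with
  | nil => exact absurd rfl hl
  | cons s t ih =>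
    obtain ⟨a', ha', hta', rfl⟩ := ha.eq_mcomp_of_cons
    obtain ⟨m', hm', htm', rfl⟩ := hm.eq_mcomp_of_cons
    refine mcomp_ldvd_mcomp ha' hm' ?_
    rcases eq_or_ne t [] with rfl | ht
    · cases hta'
      obtain rfl : _ = m'.2.1 := ha'.trans hm'.symm
      exact ldvd_id m'
    · exact ih ht hta' htm'

theorem ProdEq.isChain {l : List (Mor C)} {m : Mor C} (h : ProdEq l m) :
    l.IsChain (fun a b => a.1 = b.2.1) := by
  induction h with
  | nil => exact .nil
  | single => exact .singleton _
  | cons s hl hc ih =>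
    cases hl with
    | nil => exact .singleton _
    | single => exact .cons_cons hc.symm ih
    | cons => exact .cons_cons hc.symm ih

theorem mem_mulSet {c z : Mor C} {e : Set (Mor C)} :
    z ∈ mulSet c e ↔ ∃ y h, y ∈ e ∧ z = mcomp c y h := by
  constructor
  · rintro ⟨w, g, hg, rfl⟩
    exact ⟨⟨w, c.1, g⟩, rfl, hg, by simp [mcomp]⟩
  · rintro ⟨⟨w, v, g⟩, h, hy, rfl⟩
    dsimp only at h
    subst h
    exact ⟨w, g, hy, by simp [mcomp]⟩

theorem mem_divSet {c z : Mor C} {e : Set (Mor C)} :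
    z ∈ divSet c e ↔ ∃ h, mcomp c z h ∈ e := by
  constructor
  · rintro ⟨w, g, rfl, hg⟩
    exact ⟨rfl, by simpa [mcomp] using hg⟩
  · obtain ⟨w, v, g⟩ := z
    rintro ⟨h, hz⟩
    dsimp only at h
    subst h
    exact ⟨w, g, rfl, by simpa [mcomp] using hz⟩

theorem mulSet_iUnion {ι : Sort*} (c : Mor C) (f : ι → Set (Mor C)) :
    mulSet c (⋃ i, f i) = ⋃ i, mulSet c (f i) := by
  ext z
  simp only [mem_mulSet, Set.mem_iUnion]
  tauto

theorem divSet_iUnion {ι : Sort*} (c : Mor C) (f : ι → Set (Mor C)) :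
    divSet c (⋃ i, f i) = ⋃ i, divSet c (f i) := by
  ext z
  simp only [mem_divSet, Set.mem_iUnion]
  tauto

theorem divSet_inter_princ (c : Mor C) (e : Set (Mor C)) :
    divSet c (e ∩ princ c) = divSet c e := by
  ext z
  simp only [mem_divSet, Set.mem_inter_iff]
  exact exists_congr fun h => and_iff_left (ldvd_mcomp c z h)

theorem mulSet_princ_s14 (c x : Mor C) (h : x.2.1 = c.1) :
    mulSet c (princ x) = princ (mcomp c x h) := by
  ext z
  rw [mem_mulSet]
  constructor
  · rintro ⟨y, hy, hxy, rfl⟩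
    exact mcomp_ldvd_mcomp h hy hxy
  · intro hz
    obtain ⟨b, hb, rfl⟩ := ldvd.exists_eq_mcomp hz
    exact ⟨mcomp x b hb, h, ldvd_mcomp x b hb, mcomp_assoc c x b h hb⟩

theorem mulSet_princ_of_ne (c x : Mor C) (h : x.2.1 ≠ c.1) : mulSet c (princ x) = ∅ := by
  ext z
  simp only [mem_mulSet, Set.mem_empty_iff_false, iff_false]
  rintro ⟨y, hy, hxy, rfl⟩
  obtain ⟨b, hb, rfl⟩ := ldvd.exists_eq_mcomp hxy
  exact h hy

theorem divSet_princ_mcomp (hC : LeftCancellative C) (c b : Mor C) (h : b.2.1 = c.1) :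
    divSet c (princ (mcomp c b h)) = princ b := by
  ext z
  rw [mem_divSet]
  constructor
  · rintro ⟨hz, hbz⟩
    exact (mcomp_ldvd_mcomp_iff hC h hz).1 hbz
  · intro hbz
    obtain ⟨d, hd, rfl⟩ := ldvd.exists_eq_mcomp hbz
    exact ⟨h, mcomp_ldvd_mcomp (y := mcomp b d hd) h h (ldvd_mcomp b d hd)⟩

theorem objIdeal_eq_princ (v : C) : objIdeal v = princ ⟨v, v, 𝟙 v⟩ := by
  ext ⟨a, b, f⟩
  constructor
  · rintro rfl
    exact ⟨a, f, by simp⟩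
  · rintro ⟨c, g, h⟩
    cases h
    rfl

def IsFGRightIdeal (e : Set (Mor C)) : Prop :=
  ∃ s : Finset (Mor C), e = ⋃ x ∈ s, princ x

theorem isFGRightIdeal_princ (x : Mor C) : IsFGRightIdeal (princ x) :=
  ⟨{x}, by simp⟩

theorem IsFGRightIdeal.biUnion {ι : Type*} (s : Finset ι) {f : ι → Set (Mor C)}
    (hf : ∀ i ∈ s, IsFGRightIdeal (f i)) : IsFGRightIdeal (⋃ i ∈ s, f i) := by
  classical
  choose! t ht using hf
  exact ⟨s.biUnion t, by rw [Finset.set_biUnion_biUnion]; exact Set.iUnion₂_congr ht⟩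

theorem IsFGRightIdeal.princ_subset {e : Set (Mor C)} (he : IsFGRightIdeal e) {x : Mor C}
    (hx : x ∈ e) : princ x ⊆ e := by
  obtain ⟨s, rfl⟩ := he
  obtain ⟨y, hy, hyx⟩ := Set.mem_iUnion₂.1 hx
  exact fun z hz => Set.mem_iUnion₂.2 ⟨y, hy, ldvd_trans hyx hz⟩

theorem isFGRightIdeal_mulSet_princ (c x : Mor C) : IsFGRightIdeal (mulSet c (princ x)) := by
  by_cases h : x.2.1 = c.1
  · rw [mulSet_princ_s14 c x h]
    exact isFGRightIdeal_princ _
  · rw [mulSet_princ_of_ne c x h]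
    exact ⟨∅, by simp⟩

theorem isFGRightIdeal_divSet_princ (hC : LeftCancellative C) (hFA : FinitelyAligned C)
    (c x : Mor C) : IsFGRightIdeal (divSet c (princ x)) := by
  obtain ⟨F, hF⟩ := hFA x c
  rw [← divSet_inter_princ, hF]
  simp only [divSet_iUnion]
  refine .biUnion F fun t ht => ?_
  have hct : ldvd c t := (hF ▸ Set.mem_biUnion ht (ldvd_refl t) : t ∈ princ x ∩ princ c).2
  obtain ⟨b, hb, rfl⟩ := hct.exists_eq_mcomp
  rw [divSet_princ_mcomp hC]
  exact isFGRightIdeal_princ b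

theorem IsConstructible.isFGRightIdeal (hC : LeftCancellative C) (hFA : FinitelyAligned C)
    {e : Set (Mor C)} (he : IsConstructible e) : IsFGRightIdeal e := by
  induction he with
  | base v =>
    rw [objIdeal_eq_princ]
    exact isFGRightIdeal_princ _
  | mul c _ ih =>
    obtain ⟨s, rfl⟩ := ih
    simp only [mulSet_iUnion]
    exact .biUnion s fun x _ => isFGRightIdeal_mulSet_princ c x
  | div c _ ih =>
    obtain ⟨s, rfl⟩ := ih
    simp only [divSet_iUnion]
    exact .biUnion s fun x _ => isFGRightIdeal_divSet_princ hC hFA c x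

theorem isConstructible_princ (x : Mor C) : IsConstructible (princ x) := by
  rw [← mcomp_id x rfl, ← mulSet_princ_s14, ← objIdeal_eq_princ]
  exact .mul x (.base x.1)

theorem IsConstructible.princ_inter (x : Mor C) {f : Set (Mor C)} (hf : IsConstructible f) :
    IsConstructible (princ x ∩ f) := by
  have heq : princ x ∩ f = mulSet x (divSet x f) := by
    ext z
    simp only [mem_mulSet, mem_divSet, Set.mem_inter_iff]
    constructor
    · rintro ⟨hxz, hz⟩
      obtain ⟨b, hb, rfl⟩ := ldvd.exists_eq_mcomp hxz
      exact ⟨b, hb, ⟨hb, hz⟩, rfl⟩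
    · rintro ⟨y, h, ⟨_, hy⟩, rfl⟩
      exact ⟨ldvd_mcomp x y h, hy⟩
  rw [heq]
  exact .mul x (.div x hf)

theorem IsCharacter.mono {χ : Set (Mor C) → Prop} (hχ : IsCharacter χ) {e f : Set (Mor C)}
    (he : IsConstructible e) (hf : IsConstructible f) (hef : e ⊆ f) (h : χ e) : χ f := by
  have hmeet := hχ.2.2 e f he hf
  rw [Set.inter_eq_left.2 hef] at hmeet
  exact (hmeet.1 h).2

theorem InOmega.exists_of_eq_biUnion {χ : Set (Mor C) → Prop} (hχ : InOmega χ) {ι : Type*}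
    {s : Finset ι} {f : ι → Set (Mor C)} {e : Set (Mor C)} (he : IsConstructible e)
    (hf : ∀ i ∈ s, IsConstructible (f i)) (hef : e = ⋃ i ∈ s, f i) (h : χ e) :
    ∃ i ∈ s, χ (f i) := by
  have hunion : e = ⋃ j, f (s.equivFin.symm j) := by
    rw [hef]
    ext z
    simp only [Set.mem_iUnion]
    constructor
    · rintro ⟨i, hi, hz⟩
      exact ⟨s.equivFin ⟨i, hi⟩, by simpa using hz⟩
    · rintro ⟨j, hz⟩
      exact ⟨_, (s.equivFin.symm j).2, hz⟩
  obtain ⟨j, hj⟩ := hχ.2 _ e _ he (fun j => hf _ (s.equivFin.symm j).2) hunion h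
  exact ⟨_, (s.equivFin.symm j).2, hj⟩

theorem InOmega.exists_mem (hC : LeftCancellative C) (hFA : FinitelyAligned C)
    {χ : Set (Mor C) → Prop} (hχ : InOmega χ) {e : Set (Mor C)}
    (he : IsConstructible e) (h : χ e) : ∃ x ∈ e, χ (princ x) := by
  obtain ⟨s, rfl⟩ := he.isFGRightIdeal hC hFA
  obtain ⟨x, hx, hχx⟩ :=
    hχ.exists_of_eq_biUnion he (fun x _ => isConstructible_princ x) rfl h
  exact ⟨x, Set.mem_biUnion hx (ldvd_refl x), hχx⟩

theorem InOmega.directedOn (hC : LeftCancellative C) (hFA : FinitelyAligned C)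
    {χ : Set (Mor C) → Prop} (hχ : InOmega χ) :
    DirectedOn ldvd {x | χ (princ x)} := by
  intro x hx y hy
  have hxy : χ (princ x ∩ princ y) :=
    (hχ.1.2.2 _ _ (isConstructible_princ x) (isConstructible_princ y)).2 ⟨hx, hy⟩
  obtain ⟨z, ⟨hxz, hyz⟩, hz⟩ :=
    hχ.exists_mem hC hFA ((isConstructible_princ y).princ_inter x) hxy
  exact ⟨z, hz, hxz, hyz⟩

theorem InOmega.iff_princ_subset_of_forall_ldvd (hC : LeftCancellative C)
    (hFA : FinitelyAligned C) {χ : Set (Mor C) → Prop} (hχ : InOmega χ)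
    {p : Mor C} (hp : χ (princ p)) (hgreatest : ∀ y, χ (princ y) → ldvd y p)
    {e : Set (Mor C)} (he : IsConstructible e) : χ e ↔ princ p ⊆ e := by
  refine ⟨fun h => ?_, fun hpe => hχ.1.mono (isConstructible_princ p) he hpe hp⟩
  obtain ⟨x, hxe, hx⟩ := hχ.exists_mem hC hFA he h
  exact (princ_subset_princ (hgreatest x hx)).trans ((he.isFGRightIdeal hC hFA).princ_subset hxe)

theorem DirectedOn.exists_seq_strict_cofinal {α : Type*} [Countable α] {r : α → α → Prop}
    [IsTrans α r] {s : Set α} (hs : DirectedOn r s) (hne : s.Nonempty)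
    (hmax : ∀ x ∈ s, ∃ y ∈ s, ¬ r y x) :
    ∃ X : ℕ → α, (∀ n, X n ∈ s) ∧ (∀ n, r (X n) (X (n + 1)) ∧ ¬ r (X (n + 1)) (X n)) ∧
      ∀ x ∈ s, ∃ n, r x (X n) := by
  -- Without maximal elements, `s` stays directed for the strict relation.
  have hstrict : DirectedOn (fun x y => r x y ∧ ¬ r y x) s := by
    intro a ha b hb
    obtain ⟨z, hz, haz, hbz⟩ := hs a ha b hb
    obtain ⟨y, hy, hyz⟩ := hmax z hz
    obtain ⟨c, hc, hzc, hyc⟩ := hs z hz y hy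
    have hcz : ¬ r c z := fun h => hyz (_root_.trans hyc h)
    exact ⟨c, hc, ⟨_root_.trans haz hzc, fun h => hcz (_root_.trans h haz)⟩,
      ⟨_root_.trans hbz hzc, fun h => hcz (_root_.trans h hbz)⟩⟩
  obtain ⟨x₀, hx₀⟩ := hne
  have : Inhabited s := ⟨⟨x₀, hx₀⟩⟩
  let := Encodable.ofCountable s
  have hd : Directed (fun x y => r x y ∧ ¬ r y x) (Subtype.val : s → α) :=
    directedOn_iff_directed.1 hstrict
  exact ⟨fun n => (hd.sequence _ n).1, fun n => (hd.sequence _ n).2,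
    hd.sequence_mono_nat, fun x hx => ⟨_, (hd.rel_sequence ⟨x, hx⟩).1⟩⟩

theorem List.exists_seq_map_range_eq_take {α : Type*} (P : ℕ → List α)
    (hP : ∀ n, P n <+: P (n + 1)) (hlen : ∀ k, ∃ n, k < (P n).length) :
    ∃ w : ℕ → α, ∀ n k, k ≤ (P n).length → (List.range k).map w = (P n).take k := by
  have hmono : ∀ m n, m ≤ n → P m <+: P n := fun m =>
    Nat.le_induction (List.prefix_refl _) fun n _ ih => ih.trans (hP n)
  have hagree : ∀ m n k (hm : k < (P m).length) (hn : k < (P n).length),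
      (P m)[k] = (P n)[k] := by
    intro m n k hm hn
    rcases le_total m n with h | h
    · exact (hmono m n h).getElem hm
    · exact ((hmono n m h).getElem hn).symm
  choose N hN using hlen
  refine ⟨fun k => (P (N k))[k]'(hN k), fun n k hk => List.ext_getElem (by simpa) ?_⟩
  intro i hi _
  simp only [List.getElem_map, List.getElem_range, List.getElem_take]
  exact hagree _ _ _ _ _

theorem exists_words_of_chain (S : Set (Mor C))
    (hgen : ∀ a : Mor C, ∃ l : List (Mor C), (∀ x ∈ l, x ∈ S) ∧ ProdEq l a) (X : ℕ → Mor C)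
    (hX : ∀ n, ldvd (X n) (X (n + 1)) ∧ ¬ ldvd (X (n + 1)) (X n)) :
    ∃ P : ℕ → List (Mor C), (∀ n, ∀ s ∈ P n, s ∈ S) ∧ (∀ n, ProdEq (P n) (X n)) ∧
      ∀ n, ∃ l ≠ [], P (n + 1) = P n ++ l := by
  have hgap : ∀ n, ∃ l : List (Mor C), l ≠ [] ∧ (∀ s ∈ l, s ∈ S) ∧
      ∃ b h, ProdEq l b ∧ X (n + 1) = mcomp (X n) b h := by
    intro n
    obtain ⟨b, hb, hXb⟩ := (hX n).1.exists_eq_mcomp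
    obtain ⟨l, hlS, hl⟩ := hgen b
    refine ⟨l, ?_, hlS, b, hb, hl, hXb⟩
    rintro rfl
    have hstrict := (hX n).2
    rw [hXb, hl.mcomp_eq_self_of_nil] at hstrict
    exact hstrict (ldvd_refl _)
  choose g hg hgS b hb hgb hXb using hgap
  obtain ⟨l₀, hl₀S, hl₀⟩ := hgen (X 0)
  let P : ℕ → List (Mor C) := fun n => Nat.rec l₀ (fun n p => p ++ g n) n
  refine ⟨P, fun n => ?_, fun n => ?_, fun n => ⟨g n, hg n, rfl⟩⟩
  · induction n with
    | zero => exact hl₀S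
    | succ n ih =>
      intro s hs
      rcases List.mem_append.1 hs with hs | hs
      exacts [ih s hs, hgS n s hs]
  · induction n with
    | zero => exact hl₀
    | succ n ih =>
      rw [hXb n]
      exact ih.append (hgb n) (hb n)

theorem exists_path_of_chain (S : Set (Mor C))
    (hgen : ∀ a : Mor C, ∃ l : List (Mor C), (∀ x ∈ l, x ∈ S) ∧ ProdEq l a) (X : ℕ → Mor C)
    (hX : ∀ n, ldvd (X n) (X (n + 1)) ∧ ¬ ldvd (X (n + 1)) (X n)) :
    ∃ w : ℕ → Mor C, (∀ n, w n ∈ S) ∧ (∀ n, (w n).1 = (w (n + 1)).2.1) ∧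
      (∀ n, ∃ k m, ProdEq ((List.range (k + 1)).map w) m ∧ ldvd (X n) m) ∧
      ∀ k m, ProdEq ((List.range (k + 1)).map w) m → ∃ n, ldvd m (X n) := by
  obtain ⟨P, hPS, hPX, hPstep⟩ := exists_words_of_chain S hgen X hX
  have hlen : ∀ n, n ≤ (P n).length := by
    intro n
    induction n with
    | zero => exact Nat.zero_le _
    | succ n ih =>
      obtain ⟨l, hl, hPl⟩ := hPstep n
      rw [hPl, List.length_append]
      have := List.length_pos_iff.2 hl
      omega
  obtain ⟨w, hw⟩ := List.exists_seq_map_range_eq_take P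
    (fun n => by obtain ⟨l, -, hPl⟩ := hPstep n; exact hPl ▸ List.prefix_append _ _)
    (fun k => ⟨k + 1, hlen (k + 1)⟩)
  have hpre : ∀ k, (List.range k).map w = (P k).take k := fun k => hw k k (hlen k)
  refine ⟨w, fun n => ?_, fun n => ?_, fun n => ?_, fun k m hm => ⟨k + 1, ?_⟩⟩
  · have hn : w n ∈ (List.range (n + 1)).map w :=
      List.mem_map_of_mem (List.mem_range.2 n.lt_succ_self)
    rw [hpre] at hn
    exact hPS _ _ (List.mem_of_mem_take hn)
  · have hc := (hPX (n + 2)).isChain.take (n + 2)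
    rw [← hpre, List.isChain_map, List.isChain_range_succ] at hc
    exact hc n n.lt_succ_self
  · have hpos : 0 < (P (n + 1)).length := by have := hlen (n + 1); omega
    refine ⟨(P (n + 1)).length - 1, X (n + 1), ?_, (hX n).1⟩
    rw [Nat.sub_add_cancel hpos, hw _ _ le_rfl, List.take_length]
    exact hPX (n + 1)
  · refine hm.ldvd_of_append (by simp) (l' := (P (k + 1)).drop (k + 1)) ?_
    rw [hpre, List.take_append_drop]
    exact hPX (k + 1)

/-- Let `𝔠` be a countable finitely aligned left cancellative small category generated by
a subset `𝔖`.  Every character `χ ∈ Ω` which is not of the form `χ_x` for some `x ∈ 𝔠`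
equals `χ_w` for some infinite path `w = s₁ s₂ ⋯` in `𝔖`. -/
theorem character_eq_chiW_of_not_principal [Countable (Mor C)]
    (hmono : ∀ {a b : C} (f : a ⟶ b), Mono f)
    (hFA : ∀ a b : Mor C, ∃ F : Finset (Mor C), princ a ∩ princ b = ⋃ c ∈ F, princ c)
    (S : Set (Mor C))
    (hgen : ∀ a : Mor C, ∃ l : List (Mor C), (∀ x ∈ l, x ∈ S) ∧ ProdEq l a)
    (χ : Set (Mor C) → Prop) (hχ : InOmega χ)
    (hnp : ¬ ∃ x : Mor C, ∀ e : Set (Mor C), IsConstructible e → (χ e ↔ princ x ⊆ e)) :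
    ∃ w : ℕ → Mor C, (∀ n, w n ∈ S) ∧ (∀ n, (w n).1 = (w (n + 1)).2.1) ∧
      ∀ e : Set (Mor C), IsConstructible e → (χ e ↔ chiW w e) := by
  obtain ⟨e₀, he₀, hχe₀⟩ := hχ.1.1
  obtain ⟨x₀, -, hx₀⟩ := hχ.exists_mem hmono hFA he₀ hχe₀
  have hnomax : ∀ p ∈ {x | χ (princ x)}, ∃ y ∈ {x | χ (princ x)}, ¬ ldvd y p := by
    intro p hp
    by_contra! hgreatest
    exact hnp ⟨p, fun e => hχ.iff_princ_subset_of_forall_ldvd hmono hFA hp hgreatest⟩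
  obtain ⟨X, hXχ, hX, hXcofinal⟩ :=
    (hχ.directedOn hmono hFA).exists_seq_strict_cofinal ⟨x₀, hx₀⟩ hnomax
  obtain ⟨w, hwS, hwpath, hXw, hwX⟩ := exists_path_of_chain S hgen X hX
  refine ⟨w, hwS, hwpath, fun e he => ⟨fun hχe => ?_, fun ⟨k, m, hm, hme⟩ => ?_⟩⟩
  · obtain ⟨x, hxe, hx⟩ := hχ.exists_mem hmono hFA he hχe
    obtain ⟨n, hxX⟩ := hXcofinal x hx
    obtain ⟨k, m, hm, hXm⟩ := hXw n
    exact ⟨k, m, hm, (he.isFGRightIdeal hmono hFA).princ_subset hxe (ldvd_trans hxX hXm)⟩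
  · obtain ⟨n, hmX⟩ := hwX k m hm
    have hXe : princ (X n) ⊆ e :=
      (princ_subset_princ hmX).trans ((he.isFGRightIdeal hmono hFA).princ_subset hme)
    exact hχ.1.mono (isConstructible_princ _) he hXe (hXχ n)
end

section
/- In a higher rank graph 𝔠 with degree functor 𝕕 : 𝔠 → ℤ₀^k and Garside family 𝔖 = 𝕕⁻¹(S_P) where S_P is the set of nonzero tuples with all coordinates 0 or 1: for s, t ∈ 𝔖 with 𝔡(s) = 𝔱(t), the path st is normal if and only if 𝕕(s) ≥ 𝕕(t) coordinatewise. -/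
open CategoryTheory

variable {C : Type*} [Category C]

lemma prodEq_single {a m : Mor C} (h : ProdEq [a] m) : m = a := by
  cases h with
  | single => rfl
  | cons s h' hc =>
    cases h' with
    | nil v =>
      dsimp only at hc
      subst hc
      simp [mcomp]

lemma prodEq_pair {a b m : Mor C} (h : ProdEq [a, b] m) :
    ∃ hc : b.2.1 = a.1, m = mcomp a b hc := by
  cases h with
  | cons s h' hc =>
    have hb := prodEq_single h'
    subst hb
    exact ⟨hc, rfl⟩

/-- In a higher rank graph `𝔠` with degree functor `𝕕 : 𝔠 → ℤ₀^k`, with the Garside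
family `𝔖 = 𝕕⁻¹(S_P)` where `S_P` is the set of nonzero tuples with all coordinates
`0` or `1`:  for `s, t ∈ 𝔖` with `𝔡(s) = 𝔱(t)`, the path `st` is normal if and only if
`𝕕(s) ≥ 𝕕(t)` coordinatewise. -/
theorem higherRankGraph_normalPair_iff (k : ℕ)
    (deg : ∀ {a b : C}, (a ⟶ b) → (Fin k → ℕ))
    (hid : ∀ a : C, deg (𝟙 a) = 0)
    (hcomp : ∀ {a b c : C} (f : a ⟶ b) (g : b ⟶ c), deg (f ≫ g) = deg f + deg g)
    (hufp : ∀ {a b : C} (c : a ⟶ b) (p q : Fin k → ℕ), deg c = p + q →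
      ∃! z : Σ m : C, (a ⟶ m) × (m ⟶ b),
        z.2.1 ≫ z.2.2 = c ∧ deg z.2.1 = p ∧ deg z.2.2 = q)
    (S : Set (Mor C))
    (hS : S = {m : Mor C | deg m.2.2 ≠ 0 ∧ ∀ j, deg m.2.2 j ≤ 1})
    (s t : Mor C) (hs : s ∈ S) (ht : t ∈ S) (hc : t.2.1 = s.1) :
    NormalPair S s t ↔ ∀ j, deg t.2.2 j ≤ deg s.2.2 j := by
  subst hS
  obtain ⟨s0, s1, sf⟩ := s
  obtain ⟨t0, t1, tf⟩ := t
  simp only [Set.mem_setOf_eq] at hs ht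
  dsimp only at hc hs ht ⊢
  subst hc
  constructor
  · -- normal → deg t ≤ deg s
    intro hN j
    obtain ⟨⟨z0, z1, z2⟩, ⟨hz1, hz2, hz3⟩, -⟩ :=
      hufp (tf ≫ sf) (deg sf) (deg tf) (by rw [hcomp]; exact add_comm _ _)
    dsimp only at hz1 hz2 hz3
    have hrS : (⟨z0, s1, z2⟩ : Mor C) ∈
        {m : Mor C | deg m.2.2 ≠ 0 ∧ ∀ j, deg m.2.2 j ≤ 1} := by
      simp only [Set.mem_setOf_eq]
      rw [hz3]
      exact ht
    have hm0 : mcomp (⟨t1, s1, sf⟩ : Mor C) ⟨t0, t1, tf⟩ rfl = ⟨t0, s1, tf ≫ sf⟩ := by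
      simp [mcomp]
    have hld : ldvd (⟨z0, s1, z2⟩ : Mor C) (mcomp ⟨t1, s1, sf⟩ ⟨t0, t1, tf⟩ rfl) := by
      refine ⟨t0, z1, ?_⟩
      rw [hm0, ← hz1]
    have hdvds := hN _ (ProdEq.cons _ (ProdEq.single _) rfl) _ hrS hld
    obtain ⟨c, g, hg⟩ := hdvds
    obtain ⟨h1, h2⟩ := Sigma.mk.inj_iff.mp hg
    subst h1
    have h3 := (Sigma.mk.inj_iff.mp (eq_of_heq h2)).2
    have hg' : sf = g ≫ z2 := eq_of_heq h3
    have hdg : deg sf = deg g + deg z2 := by rw [hg', hcomp]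
    have := congrFun hdg j
    simp only [Pi.add_apply] at this
    rw [hz3] at this
    omega
  · -- deg t ≤ deg s → normal
    intro hle m hm r hr hrm
    obtain ⟨hc', rfl⟩ := prodEq_pair hm
    obtain ⟨r0, r1, rf⟩ := r
    simp only [Set.mem_setOf_eq] at hr
    obtain ⟨c, g, hg⟩ := hrm
    dsimp only at g hg
    have hm0 : mcomp (⟨t1, s1, sf⟩ : Mor C) ⟨t0, t1, tf⟩ hc' = ⟨t0, s1, tf ≫ sf⟩ := by
      simp [mcomp]
    rw [hm0] at hg
    obtain ⟨h1, h2⟩ := Sigma.mk.inj_iff.mp hg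
    subst h1
    obtain ⟨h3, h4⟩ := Sigma.mk.inj_iff.mp (eq_of_heq h2)
    subst h3
    have hg' : tf ≫ sf = g ≫ rf := eq_of_heq h4
    have hdeq : deg (tf ≫ sf) = deg (g ≫ rf) := by rw [hg']
    rw [hcomp, hcomp] at hdeq
    have hsum : ∀ j, deg tf j + deg sf j = deg g j + deg rf j := fun j => by
      have := congrFun hdeq j
      simpa using this
    have hrs : ∀ j, deg rf j ≤ deg sf j := fun j => by
      have h3 := hr.2 j
      have h4 := hle j
      have h5 := hsum j
      omega
    obtain ⟨⟨z0, z1, z2⟩, ⟨hz1, hz2, hz3⟩, -⟩ :=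
      hufp sf (fun j => deg sf j - deg rf j) (deg rf)
        (funext fun j => (Nat.sub_add_cancel (hrs j)).symm)
    dsimp only at hz1 hz2 hz3
    obtain ⟨w, -, huniq⟩ :=
      hufp (tf ≫ sf) (fun j => deg tf j + (deg sf j - deg rf j)) (deg rf)
        (by funext j; rw [hcomp]; have := hrs j; simp; omega)
    have e1 : (⟨r0, g, rf⟩ : Σ m : C, (t0 ⟶ m) × (m ⟶ s1)) = w := by
      refine huniq _ ⟨hg'.symm, ?_, rfl⟩
      funext j
      have := hsum j
      have := hrs j
      simp only []
      omega
    have e2 : (⟨z0, tf ≫ z1, z2⟩ : Σ m : C, (t0 ⟶ m) × (m ⟶ s1)) = w := by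
      refine huniq _ ⟨by rw [Category.assoc, hz1], ?_, hz3⟩
      funext j
      rw [hcomp]
      simp [hz2]
    have e := e1.trans e2.symm
    obtain ⟨h5, h6⟩ := Sigma.mk.inj_iff.mp e
    subst h5
    have h7 : (g, rf) = (tf ≫ z1, z2) := eq_of_heq h6
    have h8 : rf = z2 := congrArg Prod.snd h7
    refine ⟨t1, z1, ?_⟩
    rw [h8, ← hz1]
end
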